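/- arXiv:2509.12216 — 4 statements merged into one kernel-verified Lean document; each statement's English description precedes it below -/
import Mathlib

section
/- If a shape S in the plane cannot be surrounded by copies of itself (i.e., there is no finite patch of copies of S containing S in its interior with every other tile a neighbour of S), then S does not admit a tiling of the plane. -/
open Set Metric

/-- The Euclidean plane. -/
abbrev Plane := EuclideanSpace ℝ (Fin 2)

/-- `t` is a congruent copy of `S`: the image of `S` under an isometry of the plane. -/
def IsCopy (S t : Set Plane) : Prop := ∃ f : Plane ≃ᵢ Plane, t = f '' S

/-- A shape: a compact topological disk in the plane. -/
def IsShape (S : Set Plane) : Prop :=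
  IsCompact S ∧ Nonempty (S ≃ₜ (closedBall (0 : Plane) 1 : Set Plane))

/-- Tiles have pairwise disjoint interiors. -/
def PairwiseDisjointInteriors (T : Set (Set Plane)) : Prop :=
  ∀ t ∈ T, ∀ u ∈ T, t ≠ u → interior t ∩ interior u = ∅

/-- A tiling of the plane by copies of the shape `S`. -/
def IsTiling (S : Set Plane) (T : Set (Set Plane)) : Prop :=
  T.Countable ∧ (∀ t ∈ T, IsCopy S t) ∧ ⋃₀ T = univ ∧ PairwiseDisjointInteriors T

/-- Invariance of a tiling under translation by `v`. -/
def TransInv (T : Set (Set Plane)) (v : Plane) : Prop :=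
  (fun t => (fun p => p + v) '' t) '' T = T

/-- A tiling is periodic if it is invariant under two linearly independent translations. -/
def IsPeriodic (T : Set (Set Plane)) : Prop :=
  ∃ v w : Plane, LinearIndependent ℝ ![v, w] ∧ TransInv T v ∧ TransInv T w

/-- `f` is a symmetry of the tiling `T`. -/
def IsSymmetry (T : Set (Set Plane)) (f : Plane ≃ᵢ Plane) : Prop :=
  (fun t => f '' t) '' T = T

/-- The copies in `P` surround the shape `S`: together with `S` they form a patch,
`S` lies in the interior of the union, and every copy touches the boundary of `S`. -/
def Surrounds (S : Set Plane) (P : Set (Set Plane)) : Prop :=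
  P.Finite ∧ (∀ p ∈ P, IsCopy S p) ∧ (∀ p ∈ P, interior p ∩ interior S = ∅) ∧
    PairwiseDisjointInteriors P ∧ S ⊆ interior (S ∪ ⋃₀ P) ∧
    ∀ p ∈ P, (frontier p ∩ frontier S).Nonempty

/-- If a closed preconnected set `A` with nonempty interior pokes into the interior of a
closed set `B` (with disjoint interiors), then their frontiers meet. -/
lemma frontier_meet_aux {A B : Set Plane}
    (hAconn : IsPreconnected A) (hAcl : IsClosed A) (hBcl : IsClosed B)
    (hintA : (interior A).Nonempty)
    (hdisj : interior A ∩ interior B = ∅)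
    {x : Plane} (hxA : x ∈ A) (hxB : x ∈ interior B) :
    (frontier A ∩ frontier B).Nonempty := by
  have hnotsub : ¬ A ⊆ closure (interior B) := by
    intro hsub
    have hAB : A ⊆ B := hsub.trans ((closure_mono interior_subset).trans hBcl.closure_eq.subset)
    obtain ⟨a, ha⟩ := hintA
    have : a ∈ interior A ∩ interior B := ⟨ha, interior_mono hAB ha⟩
    rw [hdisj] at this
    exact this
  obtain ⟨b, hbA, hbB⟩ := not_subset.mp hnotsub
  have hfr : frontier (interior B) = closure (interior B) \ interior B := by
    rw [frontier, interior_interior]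
  have hw : (A ∩ frontier (interior B)).Nonempty := by
    by_contra hempty
    rw [not_nonempty_iff_eq_empty] at hempty
    have h1 : A ⊆ interior B ∪ (closure (interior B))ᶜ := by
      intro a ha
      by_cases hc : a ∈ closure (interior B)
      · left
        by_contra hni
        have : a ∈ A ∩ frontier (interior B) := ⟨ha, hfr ▸ ⟨hc, hni⟩⟩
        rw [hempty] at this
        exact this
      · exact Or.inr hc
    obtain ⟨z, _, hz1, hz2⟩ := hAconn (interior B) (closure (interior B))ᶜ isOpen_interior
      isClosed_closure.isOpen_compl h1 ⟨x, hxA, hxB⟩ ⟨b, hbA, hbB⟩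
    exact hz2 (subset_closure hz1)
  obtain ⟨w, hwA, hwF⟩ := hw
  refine ⟨w, ?_, ?_⟩
  · rw [hAcl.frontier_eq]
    refine ⟨hwA, fun hwint => ?_⟩
    rw [hfr] at hwF
    obtain ⟨z, hz⟩ := mem_closure_iff.mp hwF.1 (interior A) isOpen_interior hwint
    have : z ∈ interior A ∩ interior B := ⟨hz.1, hz.2⟩
    rw [hdisj] at this
    exact this
  · rw [hfr] at hwF
    exact ⟨closure_mono interior_subset hwF.1, hwF.2⟩

/-- Packing lemma: in a family of copies of `S` with pairwise disjoint interiors, only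
finitely many members meet a bounded set. -/
lemma finite_tiles_meeting {S : Set Plane} (hScomp : IsCompact S)
    {T : Set (Set Plane)} (hcopy : ∀ u ∈ T, IsCopy S u)
    (hdisj : PairwiseDisjointInteriors T)
    {c : Plane} {ρ : ℝ} (hρ : 0 < ρ) (hball : ball c ρ ⊆ interior S)
    {K : Set Plane} (hK : Bornology.IsBounded K) :
    {u | u ∈ T ∧ (u ∩ K).Nonempty}.Finite := by
  classical
  by_contra hinf
  have hinf' : {u | u ∈ T ∧ (u ∩ K).Nonempty}.Infinite := hinf
  obtain ⟨R, hR⟩ := hK.subset_closedBall 0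
  set D := Metric.diam S with hD
  set PP := {u | u ∈ T ∧ (u ∩ K).Nonempty} with hPP
  set χ : Set Plane → Plane :=
    fun u => if h : ∃ f : Plane ≃ᵢ Plane, u = f '' S then h.choose c else 0 with hχdef
  have hcS : c ∈ S := interior_subset (hball (mem_ball_self hρ))
  have hkey : ∀ u ∈ PP, ball (χ u) ρ ⊆ interior u ∧ χ u ∈ closedBall (0 : Plane) (R + D) := by
    intro u hu
    have hcop : ∃ f : Plane ≃ᵢ Plane, u = f '' S := hcopy u hu.1
    have hfu : u = hcop.choose '' S := hcop.choose_spec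
    set f := hcop.choose with hf
    have hχu : χ u = f c := by rw [hχdef]; simp only [dif_pos hcop]; rfl
    constructor
    · rw [hχu, ← f.image_ball]
      have h2 : f '' interior S = interior u := by
        rw [hfu]; exact f.toHomeomorph.image_interior S
      exact (image_mono (f := f) hball).trans h2.subset
    · obtain ⟨y, hyu, hyK⟩ := hu.2
      have hucomp : IsCompact u := hfu ▸ hScomp.image f.continuous
      have hfc : f c ∈ u := hfu ▸ mem_image_of_mem f hcS
      have hdiam : Metric.diam u = D := by rw [hfu, f.isometry.diam_image]
      have h1 : dist (f c) y ≤ D := hdiam ▸ Metric.dist_le_diam_of_mem hucomp.isBounded hfc hyu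
      have h2 : dist y 0 ≤ R := mem_closedBall.mp (hR hyK)
      have : dist (f c) 0 ≤ D + R := (dist_triangle (f c) y 0).trans (add_le_add h1 h2)
      rw [hχu, mem_closedBall]
      linarith
  obtain ⟨net, hnetfin, hnetcov⟩ :=
    (Metric.totallyBounded_iff.mp (isCompact_closedBall (0 : Plane) (R + D)).totallyBounded) ρ hρ
  set ψ : Set Plane → Plane :=
    fun u => if h : ∃ y ∈ net, χ u ∈ ball y ρ then h.choose else 0 with hψdef
  have hψmem : ∀ u ∈ PP, ψ u ∈ net ∧ χ u ∈ ball (ψ u) ρ := by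
    intro u hu
    have := hnetcov ((hkey u hu).2)
    simp only [mem_iUnion] at this
    obtain ⟨y, hy, hmem⟩ := this
    have hex : ∃ y ∈ net, χ u ∈ ball y ρ := ⟨y, hy, hmem⟩
    rw [hψdef]
    simp only [dif_pos hex]
    exact ⟨hex.choose_spec.1, hex.choose_spec.2⟩
  have hmaps : Set.MapsTo ψ PP net := fun u hu => (hψmem u hu).1
  obtain ⟨u, hu, v, hv, huv, heq⟩ := hinf'.exists_ne_map_eq_of_mapsTo hmaps hnetfin
  have hd : dist (χ u) (χ v) < 2 * ρ := by
    have h1 := (hψmem u hu).2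
    have h2 := (hψmem v hv).2
    rw [heq] at h1
    calc dist (χ u) (χ v) ≤ dist (χ u) (ψ v) + dist (ψ v) (χ v) := dist_triangle _ _ _
      _ < ρ + ρ := add_lt_add (mem_ball.mp h1) (by rw [dist_comm]; exact mem_ball.mp h2)
      _ = 2 * ρ := by ring
  set m := midpoint ℝ (χ u) (χ v) with hm
  have hmu : m ∈ ball (χ u) ρ := by
    rw [mem_ball, hm, dist_midpoint_left]
    rw [show ‖(2:ℝ)‖ = 2 by simp]
    linarith
  have hmv : m ∈ ball (χ v) ρ := by
    rw [mem_ball, hm, dist_midpoint_right]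
    rw [show ‖(2:ℝ)‖ = 2 by simp]
    linarith
  have : m ∈ interior u ∩ interior v := ⟨(hkey u hu).1 hmu, (hkey v hv).1 hmv⟩
  rw [hdisj u hu.1 v hv.1 huv] at this
  exact this


/-- if a shape cannot be surrounded by copies of itself, then it admits
no tiling of the plane. -/
theorem unsurroundable_implies_no_tiling (S : Set Plane) (hS : IsShape S)
    (h : ¬ ∃ P, Surrounds S P) : ¬ ∃ T, IsTiling S T := by
  rintro ⟨T, hTc, hTcopy, hTun, hTdisj⟩
  apply h
  obtain ⟨hScomp, ⟨e⟩⟩ := hS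
  -- S is nonempty
  have h0cb : (0 : Plane) ∈ closedBall (0 : Plane) 1 := mem_closedBall_self zero_le_one
  have hSne : S.Nonempty := ⟨(e.symm ⟨0, h0cb⟩ : S), (e.symm ⟨0, h0cb⟩).2⟩
  -- S is preconnected
  have hSconn : IsPreconnected S := by
    have hcb : IsConnected (closedBall (0 : Plane) 1) :=
      ⟨⟨0, h0cb⟩, (convex_closedBall _ _).isPreconnected⟩
    haveI : ConnectedSpace (closedBall (0 : Plane) 1) := Subtype.connectedSpace hcb
    have huniv : IsConnected (univ : Set (closedBall (0 : Plane) 1)) :=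
      isConnected_univ
    have himg : IsConnected ((fun p : closedBall (0 : Plane) 1 => (e.symm p : Plane)) '' univ) :=
      huniv.image _ (Continuous.continuousOn (by continuity))
    have hEq : (fun p : closedBall (0 : Plane) 1 => (e.symm p : Plane)) '' univ = S := by
      ext z
      constructor
      · rintro ⟨p, -, rfl⟩; exact (e.symm p).2
      · intro hz; exact ⟨e ⟨z, hz⟩, mem_univ _, by simp⟩
    rw [hEq] at himg
    exact himg.isPreconnected
  -- generic facts about copies
  have copy_int : ∀ {u : Set Plane} (f : Plane ≃ᵢ Plane), u = f '' S →
      interior u = f '' interior S := by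
    intro u f hf
    rw [hf]
    exact (f.toHomeomorph.image_interior S).symm
  have copy_compact : ∀ {u : Set Plane}, IsCopy S u → IsCompact u := by
    rintro u ⟨f, rfl⟩; exact hScomp.image f.continuous
  have copy_conn : ∀ {u : Set Plane}, IsCopy S u → IsPreconnected u := by
    rintro u ⟨f, rfl⟩; exact hSconn.image f f.continuous.continuousOn
  -- Baire: some tile has nonempty interior, hence S has nonempty interior
  have hintS : (interior S).Nonempty := by
    haveI := hTc.to_subtype
    have hclosed : ∀ t : T, IsClosed (t : Set Plane) := fun t =>
      (copy_compact (hTcopy t t.2)).isClosed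
    have hU : ⋃ t : T, (t : Set Plane) = univ := by
      rw [← sUnion_eq_iUnion]; exact hTun
    obtain ⟨t1, ht1⟩ := nonempty_interior_of_iUnion_of_closed hclosed hU
    obtain ⟨f, hf⟩ := hTcopy t1 t1.2
    rw [copy_int f hf] at ht1
    exact ht1.of_image
  obtain ⟨c, hc⟩ := hintS
  obtain ⟨ρ, hρ, hball⟩ := Metric.isOpen_iff.mp isOpen_interior c hc
  -- pick a tile containing 0 and transport the tiling so that S becomes a tile
  have h0 : (0 : Plane) ∈ ⋃₀ T := hTun ▸ mem_univ _
  obtain ⟨t₀, ht₀T, -⟩ := h0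
  obtain ⟨f₀, hf₀⟩ := hTcopy t₀ ht₀T
  set m := f₀.symm with hm
  set T₀ : Set (Set Plane) := (fun t => m '' t) '' T with hT₀
  have hcopy₀ : ∀ u ∈ T₀, IsCopy S u := by
    rintro u ⟨t, htT, rfl⟩
    obtain ⟨g, rfl⟩ := hTcopy t htT
    refine ⟨g.trans m, ?_⟩
    show m '' (g '' S) = (g.trans m) '' S
    rw [← Set.image_comp]
    rfl
  have hun₀ : ⋃₀ T₀ = univ := by
    rw [hT₀, ← Set.image_sUnion, hTun, Set.image_univ, m.surjective.range_eq]
  have hdisj₀ : PairwiseDisjointInteriors T₀ := by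
    rintro u ⟨t, htT, rfl⟩ v ⟨s, hsT, rfl⟩ hne
    have hts : t ≠ s := fun hh => hne (by rw [hh])
    have h1 : interior (m '' t) = m '' interior t :=
      (m.toHomeomorph.image_interior t).symm
    have h2 : interior (m '' s) = m '' interior s :=
      (m.toHomeomorph.image_interior s).symm
    rw [h1, h2, ← Set.image_inter m.injective, hTdisj t htT s hsT hts, Set.image_empty]
  have hS₀ : S ∈ T₀ := by
    refine ⟨t₀, ht₀T, ?_⟩
    show m '' t₀ = S
    rw [hf₀, ← Set.image_comp]
    have : (m ∘ f₀) = id := by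
      funext z; simp [hm]
    rw [this, Set.image_id]
  -- the surrounding patch: the other tiles of T₀ meeting S
  set P : Set (Set Plane) := {u | u ∈ T₀ ∧ u ≠ S ∧ (u ∩ S).Nonempty} with hP
  refine ⟨P, ?_, ?_, ?_, ?_, ?_, ?_⟩
  · -- finiteness
    refine (finite_tiles_meeting hScomp hcopy₀ hdisj₀ hρ hball hScomp.isBounded).subset ?_
    rintro u ⟨huT, -, hne⟩
    exact ⟨huT, hne⟩
  · exact fun p hp => hcopy₀ p hp.1
  · exact fun p hp => hdisj₀ p hp.1 S hS₀ hp.2.1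
  · exact fun p hp q hq hne => hdisj₀ p hp.1 q hq.1 hne
  · -- S is in the interior of the union
    intro x hxS
    have hFfin : {u | u ∈ T₀ ∧ (u ∩ closedBall x 1).Nonempty}.Finite :=
      finite_tiles_meeting hScomp hcopy₀ hdisj₀ hρ hball Metric.isBounded_closedBall
    set G : Set (Set Plane) := {u | (u ∈ T₀ ∧ (u ∩ closedBall x 1).Nonempty) ∧ x ∉ u} with hG
    have hGfin : G.Finite := (hFfin.subset (by rintro u ⟨hu, -⟩; exact hu) : G.Finite)
    have hGclosed : IsClosed (⋃ u ∈ G, u) :=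
      hGfin.isClosed_biUnion fun u hu => (copy_compact (hcopy₀ u hu.1.1)).isClosed
    have hxG : x ∉ ⋃ u ∈ G, u := by
      simp only [mem_iUnion]
      rintro ⟨u, hu, hxu⟩
      exact hu.2 hxu
    obtain ⟨r₁, hr₁, hball₁⟩ := Metric.isOpen_iff.mp hGclosed.isOpen_compl x hxG
    have hrpos : 0 < min r₁ 1 := lt_min hr₁ one_pos
    have hsub : ball x (min r₁ 1) ⊆ S ∪ ⋃₀ P := by
      intro y hy
      have hyU : y ∈ ⋃₀ T₀ := hun₀ ▸ mem_univ _
      obtain ⟨u, huT, hyu⟩ := hyU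
      have humeet : (u ∩ closedBall x 1).Nonempty :=
        ⟨y, hyu, mem_closedBall.mpr (le_of_lt (lt_of_lt_of_le (mem_ball.mp hy) (min_le_right _ _)))⟩
      have hxu : x ∈ u := by
        by_contra hxu
        have hyG : y ∈ ⋃ u ∈ G, u := mem_biUnion ⟨⟨huT, humeet⟩, hxu⟩ hyu
        have : y ∈ (⋃ u ∈ G, u)ᶜ :=
          hball₁ (mem_ball.mpr (lt_of_lt_of_le (mem_ball.mp hy) (min_le_left _ _)))
        exact this hyG
      by_cases hus : u = S
      · exact Or.inl (hus ▸ hyu)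
      · exact Or.inr ⟨u, ⟨huT, hus, ⟨x, hxu, hxS⟩⟩, hyu⟩
    exact interior_maximal hsub isOpen_ball (mem_ball_self hrpos)
  · -- frontier condition
    rintro p ⟨hpT, hpne, x, hxp, hxS⟩
    have hpcl : IsClosed p := (copy_compact (hcopy₀ p hpT)).isClosed
    have hScl : IsClosed S := hScomp.isClosed
    have hpconn : IsPreconnected p := copy_conn (hcopy₀ p hpT)
    have hintp : (interior p).Nonempty := by
      obtain ⟨f, hf⟩ := hcopy₀ p hpT
      rw [copy_int f hf]
      exact ⟨f c, mem_image_of_mem f hc⟩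
    have hdSp : interior S ∩ interior p = ∅ := hdisj₀ S hS₀ p hpT (fun hh => hpne hh.symm)
    have hdpS : interior p ∩ interior S = ∅ := by rw [Set.inter_comm]; exact hdSp
    by_cases hxip : x ∈ interior p
    · have := frontier_meet_aux hSconn hScl hpcl ⟨c, hc⟩ hdSp hxS hxip
      rwa [Set.inter_comm] at this
    · by_cases hxiS : x ∈ interior S
      · exact frontier_meet_aux hpconn hpcl hScl hintp hdpS hxp hxiS
      · exact ⟨x, hpcl.frontier_eq ▸ ⟨hxp, hxip⟩, hScl.frontier_eq ▸ ⟨hxS, hxiS⟩⟩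
end

section
/- A tiling of the plane is periodic (its symmetry group contains translations in two linearly independent directions) if and only if the tiles fall into finitely many transitivity classes under the action of the symmetry group, assuming the tiling is by copies of a single compact tile and is locally finite. -/
open Set Metric

/-- `T` has at most `k` transitivity classes: some set of at most `k` representative tiles
meets every orbit of the symmetry group of `T`. -/
def FinClassesLE (T : Set (Set Plane)) (k : ℕ) : Prop :=
  ∃ R : Set (Set Plane), R.Finite ∧ Nat.card R ≤ k ∧ R ⊆ T ∧
    ∀ t ∈ T, ∃ r ∈ R, ∃ f : Plane ≃ᵢ Plane, IsSymmetry T f ∧ f '' r = t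

/-- `T` has finitely many transitivity classes. -/
def FinClasses (T : Set (Set Plane)) : Prop := ∃ k, FinClassesLE T k

/-- Local finiteness: every compact set meets only finitely many tiles. -/
def LocFin (T : Set (Set Plane)) : Prop :=
  ∀ K : Set Plane, IsCompact K → {t | t ∈ T ∧ (t ∩ K).Nonempty}.Finite

section PeriodicAuxSection

namespace PeriodicAux

open Complex


noncomputable abbrev tr (v : ℂ) : ℂ ≃ᵢ ℂ := IsometryEquiv.addRight v

lemma tr_apply (v z : ℂ) : tr v z = z + v := by simp

lemma tr_zero : tr 0 = IsometryEquiv.refl ℂ := by ext z; simp [IsometryEquiv.refl]; rfl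

lemma tr_trans (v w : ℂ) : (tr v).trans (tr w) = tr (v + w) := by ext z; simp [add_assoc]

lemma tr_symm (v : ℂ) : (tr v).symm = tr (-v) := by simp

noncomputable def psi (t z : ℂ) : ℝ := (z * (starRingEnd ℂ) t).im

lemma psi_add (t z w : ℂ) : psi t (z + w) = psi t z + psi t w := by
  simp [psi, add_mul]

lemma psi_zero (t : ℂ) : psi t 0 = 0 := by simp [psi]

lemma psi_neg (t z : ℂ) : psi t (-z) = -psi t z := by simp [psi]

lemma psi_real_mul (t z : ℂ) (r : ℝ) : psi t ((r : ℂ) * z) = r * psi t z := by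
  simp [psi, mul_assoc, Complex.mul_im]

lemma psi_real_mul_t (t : ℂ) (r : ℝ) : psi t ((r : ℂ) * t) = 0 := by
  rw [psi, mul_assoc, Complex.mul_conj, ← Complex.ofReal_mul]
  exact Complex.ofReal_im _

lemma psi_abs_le (t z : ℂ) : |psi t z| ≤ ‖z‖ * ‖t‖ := by
  have h1 := Complex.abs_im_le_norm (z * (starRingEnd ℂ) t)
  rw [norm_mul, Complex.norm_conj] at h1
  simpa [psi] using h1

lemma psi_I_mul_t (t : ℂ) : psi t (Complex.I * t) = Complex.normSq t := by
  rw [psi, mul_assoc, Complex.mul_conj]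
  simp

lemma psi_conj_flip (t z : ℂ) : (t * (starRingEnd ℂ) z).im = -psi t z := by
  have h : t * (starRingEnd ℂ) z = (starRingEnd ℂ) (z * (starRingEnd ℂ) t) := by
    rw [map_mul, Complex.conj_conj]; ring
  rw [h, Complex.conj_im, psi]

lemma isometry_form (f : ℂ ≃ᵢ ℂ) :
    ∃ a : ℂ, ‖a‖ = 1 ∧ ((∀ z, f z = a * z + f 0) ∨ (∀ z, f z = a * (starRingEnd ℂ) z + f 0)) := by
  obtain ⟨a, ha⟩ := linear_isometry_complex f.toRealLinearIsometryEquiv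
  have key : ∀ z : ℂ, (f.toRealLinearIsometryEquiv : ℂ → ℂ) z = f z - f 0 :=
    fun z => f.toRealLinearIsometryEquiv_apply z
  rcases ha with h | h
  · refine ⟨a, Circle.norm_coe a, Or.inl fun z => ?_⟩
    have h2 := congrArg (fun g : ℂ ≃ₗᵢ[ℝ] ℂ => g z) h
    simp only [rotation_apply] at h2
    rw [key z] at h2
    linear_combination h2
  · refine ⟨a, Circle.norm_coe a, Or.inr fun z => ?_⟩
    have h2 := congrArg (fun g : ℂ ≃ₗᵢ[ℝ] ℂ => g z) h
    simp only [LinearIsometryEquiv.trans_apply, rotation_apply, conjLIE_apply] at h2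
    rw [key z] at h2
    linear_combination h2

lemma conj_tr_hol (f : ℂ ≃ᵢ ℂ) (a v : ℂ) (hform : ∀ z, f z = a * z + f 0) :
    f.symm.trans ((tr v).trans f) = tr (a * v) := by
  ext x
  simp only [IsometryEquiv.trans_apply, tr_apply]
  have e3 : a * (f.symm x) + f 0 = x := by rw [← hform]; exact f.apply_symm_apply x
  rw [hform]
  linear_combination e3

lemma conj_tr_anti (f : ℂ ≃ᵢ ℂ) (a v : ℂ) (hform : ∀ z, f z = a * (starRingEnd ℂ) z + f 0) :
    f.symm.trans ((tr v).trans f) = tr (a * (starRingEnd ℂ) v) := by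
  ext x
  simp only [IsometryEquiv.trans_apply, tr_apply]
  have e3 : a * (starRingEnd ℂ) (f.symm x) + f 0 = x := by
    rw [← hform]; exact f.apply_symm_apply x
  rw [hform, map_add]
  linear_combination e3

lemma unit_mul_conj {a : ℂ} (ha : ‖a‖ = 1) : a * (starRingEnd ℂ) a = 1 := by
  rw [Complex.mul_conj]
  norm_cast
  rw [Complex.normSq_eq_norm_sq]
  simp [ha]

lemma sq_anti (f : ℂ ≃ᵢ ℂ) (a : ℂ) (ha : ‖a‖ = 1)
    (hform : ∀ z, f z = a * (starRingEnd ℂ) z + f 0) :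
    f.trans f = tr (a * (starRingEnd ℂ) (f 0) + f 0) := by
  have haa := unit_mul_conj ha
  ext x
  simp only [IsometryEquiv.trans_apply, tr_apply]
  rw [hform (f x), hform x, map_add, map_mul, Complex.conj_conj]
  linear_combination x * haa

lemma commutator_tr (f g : ℂ ≃ᵢ ℂ) (a c : ℂ)
    (hf : ∀ z, f z = a * z + f 0) (hg : ∀ z, g z = c * z + g 0) :
    (f.trans g).symm.trans (g.trans f) = tr (g 0 * (a - 1) - f 0 * (c - 1)) := by
  ext x
  simp only [IsometryEquiv.trans_apply, tr_apply]
  set y := (f.trans g).symm x with hy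
  have h1 : g (f y) = x := by
    have h := (f.trans g).apply_symm_apply x
    rw [IsometryEquiv.trans_apply] at h
    exact h
  rw [hf y, hg (a * y + f 0)] at h1
  rw [hg y, hf (c * y + g 0)]
  linear_combination h1

lemma hol_one (f : ℂ ≃ᵢ ℂ) (hform : ∀ z, f z = 1 * z + f 0) : f = tr (f 0) := by
  ext x; rw [tr_apply, hform x]; ring

theorem main_complex (P : (ℂ ≃ᵢ ℂ) → Prop)
    (hcomp : ∀ f g, P f → P g → P (f.trans g))
    (hinv : ∀ f, P f → P f.symm)
    (K : Set ℂ) (Rb : ℝ) (hRb : ∀ z ∈ K, ‖z‖ ≤ Rb)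
    (hcover : ∀ z : ℂ, ∃ f, P f ∧ z ∈ f '' K) :
    ∃ v w : ℂ, LinearIndependent ℝ ![v, w] ∧ P (tr v) ∧ P (tr w) := by
  by_contra hcon
  have hRb0 : 0 ≤ Rb := by
    obtain ⟨f, hf, k, hk, _⟩ := hcover 0
    exact le_trans (norm_nonneg k) (hRb k hk)
  have hid : P (IsometryEquiv.refl ℂ) := by
    obtain ⟨f, hf, _⟩ := hcover 0
    have h := hcomp f f.symm hf (hinv f hf)
    have he : f.trans f.symm = IsometryEquiv.refl ℂ := by
      ext x; simp [IsometryEquiv.trans_apply, IsometryEquiv.refl]; rfl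
    rwa [he] at h
  have hnli : ∀ v, P (tr v) → ∀ w, P (tr w) → ¬ LinearIndependent ℝ ![v, w] :=
    fun v hv w hw hli => hcon ⟨v, w, hli, hv, hw⟩
  have hconjH : ∀ f, P f → ∀ a, (∀ z, f z = a * z + f 0) → ∀ v, P (tr v) → P (tr (a * v)) := by
    intro f hf a hform v hv
    have hP := hcomp _ _ (hinv f hf) (hcomp _ _ hv hf)
    rwa [conj_tr_hol f a v hform] at hP
  have hconjA : ∀ f, P f → ∀ a, (∀ z, f z = a * (starRingEnd ℂ) z + f 0) →
      ∀ v, P (tr v) → P (tr (a * (starRingEnd ℂ) v)) := by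
    intro f hf a hform v hv
    have hP := hcomp _ _ (hinv f hf) (hcomp _ _ hv hf)
    rwa [conj_tr_anti f a v hform] at hP
  have hsqH : ∀ f, P f → ∀ a, ‖a‖ = 1 → (∀ z, f z = a * (starRingEnd ℂ) z + f 0) →
      P (tr (a * (starRingEnd ℂ) (f 0) + f 0)) := by
    intro f hf a ha hform
    have hP := hcomp _ _ hf hf
    rwa [sq_anti f a ha hform] at hP
  have hcommH : ∀ f g a c, P f → P g → (∀ z, f z = a * z + f 0) → (∀ z, g z = c * z + g 0) →
      P (tr (g 0 * (a - 1) - f 0 * (c - 1))) := by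
    intro f g a c hf hg hfo hgo
    have hP := hcomp _ _ (hinv _ (hcomp f g hf hg)) (hcomp g f hg hf)
    rwa [commutator_tr f g a c hfo hgo] at hP
  have hholrefl0 : ∀ f, P f → (∀ z, f z = 1 * z + f 0) → P (tr (f 0)) := by
    intro f hf hform
    rw [← hol_one f hform]; exact hf
  by_cases hex : ∃ t₀, P (tr t₀) ∧ t₀ ≠ 0
  · -- Case II: there is a nontrivial translation
    obtain ⟨t₀, ht₀, ht₀0⟩ := hex
    have hnsq : Complex.normSq t₀ ≠ 0 := by simpa using ht₀0
    have hline : ∀ s, P (tr s) → ∃ r : ℝ, s = (r : ℂ) * t₀ := by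
      intro s hs
      by_contra hr
      push_neg at hr
      refine hnli t₀ ht₀ s hs (LinearIndependent.pair_iff.2 ?_)
      intro α β hαβ
      rw [Complex.real_smul, Complex.real_smul] at hαβ
      have hβ : β = 0 := by
        by_contra hβ
        have hβ' : (β : ℂ) ≠ 0 := by exact_mod_cast hβ
        apply hr (-(α / β))
        have hs' : s = -((α : ℂ) / (β : ℂ)) * t₀ := by
          field_simp
          linear_combination hαβ
        rw [hs']; push_cast; ring
      subst hβ
      refine ⟨?_, rfl⟩
      have h0 : (α : ℂ) * t₀ = 0 := by push_cast at hαβ; linear_combination hαβ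
      rcases mul_eq_zero.1 h0 with h | h
      · exact_mod_cast h
      · exact absurd h ht₀0
    have C1 : ∀ f, P f → (∀ z, psi t₀ (f z) = psi t₀ z) ∨
        (∃ c, ∀ z, psi t₀ (f z) = -psi t₀ z + c) := by
      intro f hf
      obtain ⟨a, ha, hform | hform⟩ := isometry_form f
      · obtain ⟨r, hr⟩ := hline (a * t₀) (hconjH f hf a hform t₀ ht₀)
        have har : a = (r : ℂ) := mul_right_cancel₀ ht₀0 hr
        have hr1 : r = 1 ∨ r = -1 := by
          have habs : |r| = 1 := by
            rw [har] at ha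
            simpa using ha
          rcases abs_eq (zero_le_one) |>.1 habs with h | h
          · exact Or.inl h
          · exact Or.inr h
        rcases hr1 with h1 | h1
        · left
          have ha1 : a = 1 := by rw [har, h1]; norm_num
          have hb : psi t₀ (f 0) = 0 := by
            obtain ⟨s, hs⟩ := hline (f 0)
              (hholrefl0 f hf (fun z => by rw [hform z, ha1]))
            rw [hs]; exact psi_real_mul_t t₀ s
          intro z
          rw [hform z, ha1, one_mul, psi_add, hb, add_zero]
        · right
          have ha1 : a = -1 := by rw [har, h1]; norm_num
          refine ⟨psi t₀ (f 0), fun z => ?_⟩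
          rw [hform z, ha1, psi_add, neg_one_mul, psi_neg]
      · obtain ⟨r, hr⟩ := hline (a * (starRingEnd ℂ) t₀) (hconjA f hf a hform t₀ ht₀)
        have habs : |r| = 1 := by
          have h2 := congrArg norm hr
          rw [norm_mul, norm_mul, Complex.norm_conj, Complex.norm_real, Real.norm_eq_abs] at h2
          have ha' : ‖a‖ = 1 := ha
          rw [ha', one_mul] at h2
          have ht' : ‖t₀‖ ≠ 0 := by simpa using ht₀0
          field_simp at h2
          exact h2.symm
        have hpsiac : ∀ z, psi t₀ (a * (starRingEnd ℂ) z) = -(r * psi t₀ z) := by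
          intro z
          have h3 : a * (starRingEnd ℂ) z * (starRingEnd ℂ) t₀
              = (r : ℂ) * (t₀ * (starRingEnd ℂ) z) := by
            linear_combination ((starRingEnd ℂ) z) * hr
          rw [psi, h3]
          have h4 : ((r : ℂ) * (t₀ * (starRingEnd ℂ) z)).im = r * (t₀ * (starRingEnd ℂ) z).im := by
            simp [Complex.mul_im]
          rw [h4, psi_conj_flip]
          ring
        have key : ∀ z, psi t₀ (f z) = -(r * psi t₀ z) + psi t₀ (f 0) := by
          intro z
          rw [hform z, psi_add, hpsiac]
        have hsqv : -(r * psi t₀ (f 0)) + psi t₀ (f 0) = 0 := by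
          obtain ⟨s, hs⟩ := hline _ (hsqH f hf a ha hform)
          have h4 : psi t₀ (a * (starRingEnd ℂ) (f 0) + f 0) = 0 := by
            rw [hs]; exact psi_real_mul_t t₀ s
          rw [psi_add, hpsiac] at h4
          exact h4
        rcases abs_eq (zero_le_one) |>.1 habs with h1 | h1
        · right
          refine ⟨psi t₀ (f 0), fun z => ?_⟩
          rw [key z, h1, one_mul]
        · left
          have hb0 : psi t₀ (f 0) = 0 := by rw [h1] at hsqv; linarith
          intro z
          rw [key z, h1, hb0]; ring
    have C2 : ∀ f g c c', P f → P g → (∀ z, psi t₀ (f z) = -psi t₀ z + c) →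
        (∀ z, psi t₀ (g z) = -psi t₀ z + c') → c = c' := by
      intro f g c c' hf hg hcf hcg
      have hP : P (g.symm.trans f) := hcomp _ _ (hinv g hg) hf
      have hgs : ∀ x, psi t₀ (g.symm x) = c' - psi t₀ x := by
        intro x
        have h := hcg (g.symm x)
        rw [g.apply_symm_apply] at h
        linarith
      have hh : ∀ x, psi t₀ ((g.symm.trans f) x) = psi t₀ x + (c - c') := by
        intro x
        rw [IsometryEquiv.trans_apply, hcf, hgs]
        ring
      rcases C1 _ hP with hl | ⟨c'', hr⟩
      · have e1 := hl 0
        have e2 := hh 0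
        linarith
      · exfalso
        have e1 := hr 0
        have e2 := hh 0
        have e3 := hr (Complex.I * t₀)
        have e4 := hh (Complex.I * t₀)
        rw [psi_zero] at e1 e2
        rw [psi_I_mul_t] at e3 e4
        have : Complex.normSq t₀ = 0 := by linarith
        exact hnsq this
    have hC : ∃ C : ℝ, ∀ f, P f → ∀ k ∈ K, psi t₀ (f k) ≤ C := by
      by_cases hD : ∃ g c, P g ∧ ∀ z, psi t₀ (g z) = -psi t₀ z + c
      · obtain ⟨g, c₀, hg, hgc⟩ := hD
        refine ⟨Rb * ‖t₀‖ + |c₀|, fun f hf k hk => ?_⟩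
        have hkk : ‖k‖ * ‖t₀‖ ≤ Rb * ‖t₀‖ :=
          mul_le_mul_of_nonneg_right (hRb k hk) (norm_nonneg t₀)
        have hpk := psi_abs_le t₀ k
        rcases C1 f hf with hl | ⟨c, hc⟩
        · have := hl k
          have h5 := le_abs_self (psi t₀ k)
          have h6 := abs_nonneg c₀
          linarith
        · have hcc : c = c₀ := C2 f g c c₀ hf hg hc hgc
          have h1 := hc k
          have h5 := neg_le_abs (psi t₀ k)
          have h6 := le_abs_self c₀
          rw [hcc] at h1
          linarith
      · push_neg at hD
        refine ⟨Rb * ‖t₀‖, fun f hf k hk => ?_⟩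
        have hkk : ‖k‖ * ‖t₀‖ ≤ Rb * ‖t₀‖ :=
          mul_le_mul_of_nonneg_right (hRb k hk) (norm_nonneg t₀)
        have hpk := psi_abs_le t₀ k
        rcases C1 f hf with hl | ⟨c, hc⟩
        · have := hl k
          have h5 := le_abs_self (psi t₀ k)
          linarith
        · obtain ⟨z, hz⟩ := hD f c hf
          exact absurd (hc z) hz
    obtain ⟨C, hCb⟩ := hC
    set z := (((C + 1) / Complex.normSq t₀ : ℝ) : ℂ) * (Complex.I * t₀) with hz
    have hψz : psi t₀ z = C + 1 := by
      rw [hz, psi_real_mul, psi_I_mul_t]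
      field_simp
    obtain ⟨f, hf, k, hk, hfk⟩ := hcover z
    have hb := hCb f hf k hk
    rw [hfk, hψz] at hb
    linarith
  · -- Case I: no nontrivial translations
    push_neg at hex
    have hΛtriv : ∀ v, P (tr v) → v = 0 := hex
    have hholrefl : ∀ f, P f → ∀ a, (∀ z, f z = a * z + f 0) → a = 1 →
        f = IsometryEquiv.refl ℂ := by
      intro f hf a hform ha
      have hform1 : ∀ z, f z = 1 * z + f 0 := fun z => by rw [hform z, ha]
      have h0 : f 0 = 0 := hΛtriv _ (hholrefl0 f hf hform1)
      rw [hol_one f hform1, h0, tr_zero]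
    by_cases hrot : ∃ g a, P g ∧ a ≠ 1 ∧ (∀ z, g z = a * z + g 0)
    · obtain ⟨f, a, hf, ha1, hform⟩ := hrot
      have h1a : (1 : ℂ) - a ≠ 0 := fun h => ha1 (by linear_combination -h)
      set z₀ := f 0 / (1 - a) with hz₀
      have hfixhol : ∀ g c, P g → (∀ z, g z = c * z + g 0) → g z₀ = z₀ := by
        intro g c hg hgform
        have hw : g 0 * (a - 1) - f 0 * (c - 1) = 0 :=
          hΛtriv _ (hcommH f g a c hf hg hform hgform)
        rw [hgform z₀, hz₀]
        field_simp
        linear_combination -hw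
      have hfix : ∀ g, P g → g z₀ = z₀ := by
        intro g hg
        obtain ⟨c, hc, hgform | hgform⟩ := isometry_form g
        · exact hfixhol g c hg hgform
        · have hcc := unit_mul_conj hc
          have hginv : ∀ x, g (g x) = x := by
            have h2 := sq_anti g c hc hgform
            have hv : c * (starRingEnd ℂ) (g 0) + g 0 = 0 :=
              hΛtriv _ (hsqH g hg c hc hgform)
            rw [hv, tr_zero] at h2
            intro x
            have h3 := congrArg (fun e : ℂ ≃ᵢ ℂ => e x) h2
            simp [IsometryEquiv.trans_apply, IsometryEquiv.refl] at h3; exact h3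
          have hP : P ((g.trans f).trans g) := hcomp _ _ (hcomp _ _ hg hf) hg
          have hfx : ∀ x, ((g.trans f).trans g) x
              = (starRingEnd ℂ) a * x + (c * (starRingEnd ℂ) (a * g 0 + f 0) + g 0) := by
            intro x
            simp only [IsometryEquiv.trans_apply]
            rw [hgform x, hform (c * (starRingEnd ℂ) x + g 0),
              hgform (a * (c * (starRingEnd ℂ) x + g 0) + f 0)]
            simp only [map_add, map_mul, Complex.conj_conj]
            linear_combination (x * (starRingEnd ℂ) a) * hcc
          have hhform : ∀ x, ((g.trans f).trans g) x
              = (starRingEnd ℂ) a * x + ((g.trans f).trans g) 0 := by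
            intro x
            rw [hfx x, hfx 0]
            ring
          have hfixh : ((g.trans f).trans g) z₀ = z₀ :=
            hfixhol _ ((starRingEnd ℂ) a) hP hhform
          have hgfz : g (f (g z₀)) = z₀ := by
            have h4 := hfixh
            simp only [IsometryEquiv.trans_apply] at h4
            exact h4
          have hfgz : f (g z₀) = g z₀ := by
            calc f (g z₀) = g (g (f (g z₀))) := (hginv _).symm
            _ = g z₀ := by rw [hgfz]
          have hfp : a * (g z₀) + f 0 = g z₀ := by rw [← hform]; exact hfgz
          rw [hz₀]
          field_simp
          linear_combination -hfp
      obtain ⟨f₁, hf₁, k, hk, hfk⟩ := hcover (z₀ + ((Rb + ‖z₀‖ + 1 : ℝ) : ℂ))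
      have hdist : dist (f₁ k) (f₁ z₀) = dist k z₀ := f₁.dist_eq k z₀
      rw [hfix f₁ hf₁, hfk] at hdist
      have hL : dist (z₀ + ((Rb + ‖z₀‖ + 1 : ℝ) : ℂ)) z₀ = Rb + ‖z₀‖ + 1 := by
        rw [dist_eq_norm]
        have : z₀ + ((Rb + ‖z₀‖ + 1 : ℝ) : ℂ) - z₀ = ((Rb + ‖z₀‖ + 1 : ℝ) : ℂ) := by ring
        rw [this, Complex.norm_real]
        exact Real.norm_of_nonneg (by linarith [norm_nonneg z₀])
      have hR : dist k z₀ ≤ Rb + ‖z₀‖ := by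
        rw [dist_eq_norm]
        calc ‖k - z₀‖ ≤ ‖k‖ + ‖z₀‖ := norm_sub_le k z₀
        _ ≤ Rb + ‖z₀‖ := by linarith [hRb k hk]
      linarith [hdist, hL, hR]
    · push_neg at hrot
      have hholid : ∀ f, P f → ∀ a, (∀ z, f z = a * z + f 0) → ∀ x, f x = x := by
        intro f hf a hform x
        by_cases ha : a = 1
        · have := hholrefl f hf a hform ha
          rw [this]
          rfl
        · obtain ⟨z, hz⟩ := hrot f a hf ha
          exact absurd (hform z) hz
      by_cases hanti : ∃ g c, P g ∧ ‖c‖ = 1 ∧ (∀ z, g z = c * (starRingEnd ℂ) z + g 0)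
      · obtain ⟨g₀, c₀, hg₀, hc₀, hg₀form⟩ := hanti
        have hg₀inv : ∀ x, g₀ (g₀ x) = x := by
          have h2 := sq_anti g₀ c₀ hc₀ hg₀form
          have hv : c₀ * (starRingEnd ℂ) (g₀ 0) + g₀ 0 = 0 :=
            hΛtriv _ (hsqH g₀ hg₀ c₀ hc₀ hg₀form)
          rw [hv, tr_zero] at h2
          intro x
          have h3 := congrArg (fun e : ℂ ≃ᵢ ℂ => e x) h2
          simp [IsometryEquiv.trans_apply, IsometryEquiv.refl] at h3; exact h3
        have hall : ∀ f, P f → (∀ x, f x = x) ∨ (∀ x, f x = g₀ x) := by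
          intro f hf
          obtain ⟨c, hc, hform | hform⟩ := isometry_form f
          · exact Or.inl (hholid f hf c hform)
          · right
            have hP : P (f.trans g₀) := hcomp _ _ hf hg₀
            have hfx : ∀ x, (f.trans g₀) x
                = (c₀ * (starRingEnd ℂ) c) * x + (c₀ * (starRingEnd ℂ) (f 0) + g₀ 0) := by
              intro x
              simp only [IsometryEquiv.trans_apply]
              rw [hform x, hg₀form (c * (starRingEnd ℂ) x + f 0)]
              rw [map_add, map_mul, Complex.conj_conj]
              ring
            have hhform : ∀ x, (f.trans g₀) x
                = (c₀ * (starRingEnd ℂ) c) * x + (f.trans g₀) 0 := by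
              intro x
              rw [hfx x, hfx 0]
              ring
            have hid' : ∀ x, g₀ (f x) = x := by
              intro x
              have := hholid _ hP _ hhform x
              simpa [IsometryEquiv.trans_apply] using this
            intro x
            calc f x = g₀ (g₀ (f x)) := (hg₀inv _).symm
            _ = g₀ x := by rw [hid' x]
        obtain ⟨f₁, hf₁, k, hk, hfk⟩ := hcover ((Rb + ‖g₀ 0‖ + 1 : ℝ) : ℂ)
        have hnk : ‖f₁ k‖ ≤ Rb + ‖g₀ 0‖ := by
          rcases hall f₁ hf₁ with h | h
          · rw [h k]
            have := hRb k hk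
            have := norm_nonneg (g₀ 0)
            linarith
          · rw [h k, hg₀form k]
            calc ‖c₀ * (starRingEnd ℂ) k + g₀ 0‖ ≤ ‖c₀ * (starRingEnd ℂ) k‖ + ‖g₀ 0‖ :=
                norm_add_le _ _
            _ = ‖k‖ + ‖g₀ 0‖ := by rw [norm_mul, hc₀, one_mul, RCLike.norm_conj]
            _ ≤ Rb + ‖g₀ 0‖ := by linarith [hRb k hk]
        rw [hfk, Complex.norm_real,
          Real.norm_of_nonneg (by linarith [norm_nonneg (g₀ 0)])] at hnk
        linarith
      · push_neg at hanti
        obtain ⟨f₁, hf₁, k, hk, hfk⟩ := hcover ((Rb + 1 : ℝ) : ℂ)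
        obtain ⟨c, hc, hform | hform⟩ := isometry_form f₁
        · have := hholid f₁ hf₁ c hform k
          rw [hfk] at this
          have hn := hRb k hk
          rw [← this, Complex.norm_real, Real.norm_of_nonneg (by linarith)] at hn
          linarith
        · obtain ⟨z, hz⟩ := hanti f₁ c hf₁ hc
          exact absurd (hform z) hz




/-! ### Plane-side symmetry group lemmas -/

lemma isSymmetry_trans {T : Set (Set Plane)} {f g : Plane ≃ᵢ Plane}
    (hf : IsSymmetry T f) (hg : IsSymmetry T g) : IsSymmetry T (f.trans g) := by
  unfold IsSymmetry at *
  calc (fun t => ⇑(f.trans g) '' t) '' T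
      = (fun t => ⇑g '' t) '' ((fun t => ⇑f '' t) '' T) := by
        rw [← Set.image_comp]
        apply Set.image_congr'
        intro t
        simp only [Function.comp_apply, Set.image_image, IsometryEquiv.trans_apply]
        rfl
    _ = T := by rw [hf, hg]

lemma isSymmetry_symm {T : Set (Set Plane)} {f : Plane ≃ᵢ Plane}
    (hf : IsSymmetry T f) : IsSymmetry T f.symm := by
  unfold IsSymmetry at *
  conv_lhs => rw [← hf]
  rw [← Set.image_comp]
  have h : ((fun t => ⇑f.symm '' t) ∘ fun t => ⇑f '' t) = id := by
    funext t
    simp [Set.image_image]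
  rw [h, Set.image_id]

lemma transInv_iff (T : Set (Set Plane)) (v : Plane) :
    TransInv T v ↔ IsSymmetry T (IsometryEquiv.addRight v) := by
  have h : ⇑(IsometryEquiv.addRight v) = fun p : Plane => p + v := funext fun p => by simp
  unfold TransInv IsSymmetry
  rw [h]

lemma ptr_zero : IsometryEquiv.addRight (0 : Plane) = IsometryEquiv.refl Plane := by
  ext z; simp [IsometryEquiv.refl]; rfl

lemma ptr_trans (v w : Plane) :
    (IsometryEquiv.addRight v).trans (IsometryEquiv.addRight w)
      = IsometryEquiv.addRight (v + w) := by
  ext z; simp [add_assoc]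

lemma transInv_zero (T : Set (Set Plane)) : TransInv T 0 := by
  rw [transInv_iff, ptr_zero]
  unfold IsSymmetry
  have : (fun t : Set Plane => ⇑(IsometryEquiv.refl Plane) '' t) = id := by
    funext t; simp [IsometryEquiv.refl]; exact Set.image_id t
  rw [this, Set.image_id]

lemma transInv_add {T : Set (Set Plane)} {v w : Plane}
    (hv : TransInv T v) (hw : TransInv T w) : TransInv T (v + w) := by
  rw [transInv_iff] at *
  rw [← ptr_trans]
  exact isSymmetry_trans hv hw

lemma transInv_neg {T : Set (Set Plane)} {v : Plane} (hv : TransInv T v) : TransInv T (-v) := by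
  rw [transInv_iff] at *
  have h : IsometryEquiv.addRight (-v) = (IsometryEquiv.addRight v).symm := by simp
  rw [h]
  exact isSymmetry_symm hv

/-- The subgroup of translation vectors preserving `T`. -/
noncomputable def transGroup (T : Set (Set Plane)) : AddSubgroup Plane where
  carrier := {v | TransInv T v}
  add_mem' := fun h1 h2 => transInv_add h1 h2
  zero_mem' := transInv_zero T
  neg_mem' := fun h => transInv_neg h



lemma shape_nonempty {S : Set Plane} (hS : IsShape S) : S.Nonempty := by
  obtain ⟨e⟩ := hS.2
  have h0 : (0 : Plane) ∈ closedBall (0 : Plane) 1 := by simp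
  exact ⟨(e.symm ⟨0, h0⟩ : S), (e.symm ⟨0, h0⟩).2⟩

lemma forward (S : Set Plane) (T : Set (Set Plane)) (hS : IsShape S) (hT : IsTiling S T)
    (hlf : LocFin T) : IsPeriodic T → FinClasses T := by
  rintro ⟨v, w, hli, hv, hw⟩
  set Q : Set Plane := (fun p : ℝ × ℝ => p.1 • v + p.2 • w) '' (Icc (0:ℝ) 1 ×ˢ Icc (0:ℝ) 1)
    with hQ
  have hQc : IsCompact Q := (isCompact_Icc.prod isCompact_Icc).image (by fun_prop)
  set R : Set (Set Plane) := {t | t ∈ T ∧ (t ∩ Q).Nonempty} with hR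
  have hRfin : R.Finite := hlf Q hQc
  refine ⟨Nat.card R, R, hRfin, le_refl _, fun t ht => ht.1, ?_⟩
  intro t ht
  -- pick a point of t
  obtain ⟨g, hg⟩ := hT.2.1 t ht
  obtain ⟨s₀, hs₀⟩ := shape_nonempty hS
  have hpt : g s₀ ∈ t := by rw [hg]; exact Set.mem_image_of_mem _ hs₀
  set p := g s₀ with hp
  -- coordinates of p in basis v, w
  have hcard : Fintype.card (Fin 2) = Module.finrank ℝ Plane := by
    simp [finrank_euclideanSpace_fin]
  set B := basisOfLinearIndependentOfCardEqFinrank hli hcard with hB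
  have hB0 : B 0 = v := by
    rw [hB, coe_basisOfLinearIndependentOfCardEqFinrank]; rfl
  have hB1 : B 1 = w := by
    rw [hB, coe_basisOfLinearIndependentOfCardEqFinrank]; rfl
  have hrepr : B.repr p 0 • v + B.repr p 1 • w = p := by
    have h := B.sum_repr p
    rw [Fin.sum_univ_two, hB0, hB1] at h
    exact h
  set a := B.repr p 0 with ha
  set b := B.repr p 1 with hb
  set u : Plane := (⌊a⌋ : ℤ) • v + (⌊b⌋ : ℤ) • w with hu
  have huH : TransInv T u :=
    (transGroup T).add_mem ((transGroup T).zsmul_mem hv _) ((transGroup T).zsmul_mem hw _)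
  have hun : TransInv T (-u) := transInv_neg huH
  have hu' : u = ((⌊a⌋ : ℝ)) • v + ((⌊b⌋ : ℝ)) • w := by
    rw [hu, Int.cast_smul_eq_zsmul, Int.cast_smul_eq_zsmul]
  have hpu : p - u ∈ Q := by
    refine ⟨(a - ⌊a⌋, b - ⌊b⌋), ⟨⟨?_, ?_⟩, ⟨?_, ?_⟩⟩, ?_⟩
    · simp only [sub_nonneg]; exact Int.floor_le a
    · show a - (⌊a⌋ : ℝ) ≤ 1
      have h := Int.fract_lt_one a
      rw [← Int.self_sub_floor] at h
      linarith
    · simp only [sub_nonneg]; exact Int.floor_le b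
    · show b - (⌊b⌋ : ℝ) ≤ 1
      have h := Int.fract_lt_one b
      rw [← Int.self_sub_floor] at h
      linarith
    · simp only
      rw [sub_smul, sub_smul, hu', ← hrepr]
      abel
  -- translate t to meet Q
  set t' := (fun q : Plane => q + -u) '' t with ht'
  have ht'T : t' ∈ T := by
    have h : t' ∈ (fun tt : Set Plane => (fun q : Plane => q + -u) '' tt) '' T :=
      Set.mem_image_of_mem _ ht
    rwa [hun] at h
  have ht'R : t' ∈ R := by
    refine ⟨ht'T, ⟨p + -u, Set.mem_image_of_mem _ hpt, ?_⟩⟩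
    rw [← sub_eq_add_neg]
    exact hpu
  refine ⟨t', ht'R, IsometryEquiv.addRight u, (transInv_iff T u).1 huH, ?_⟩
  have hcoe : ⇑(IsometryEquiv.addRight u) = fun q : Plane => q + u := funext fun q => by simp
  rw [hcoe, ht', Set.image_image]
  simp



lemma backward (S : Set Plane) (T : Set (Set Plane)) (hS : IsShape S) (hT : IsTiling S T) :
    FinClasses T → IsPeriodic T := by
  rintro ⟨k, R, hRfin, -, hRT, hrep⟩
  have htileC : ∀ t ∈ T, IsCompact t := by
    intro t ht
    obtain ⟨f, hf⟩ := hT.2.1 t ht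
    rw [hf]
    exact hS.1.image f.continuous
  have hKc : IsCompact (⋃₀ R) := hRfin.isCompact_sUnion (fun t ht => htileC t (hRT ht))
  have hcov : ∀ p : Plane, ∃ f, IsSymmetry T f ∧ p ∈ ⇑f '' (⋃₀ R) := by
    intro p
    have hp : p ∈ ⋃₀ T := by rw [hT.2.2.1]; trivial
    obtain ⟨t, htT, hpt⟩ := hp
    obtain ⟨r, hrR, f, hfs, hft⟩ := hrep t htT
    refine ⟨f, hfs, ?_⟩
    rw [← hft] at hpt
    obtain ⟨x, hx, hfx⟩ := hpt
    exact ⟨x, ⟨r, hrR, hx⟩, hfx⟩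
  set eL : ℂ ≃ₗᵢ[ℝ] Plane := Complex.orthonormalBasisOneI.repr with heL
  set E : ℂ ≃ᵢ Plane := eL.toIsometryEquiv with hE
  set P : (ℂ ≃ᵢ ℂ) → Prop := fun h => IsSymmetry T (E.symm.trans (h.trans E)) with hP
  have hcomp : ∀ f g, P f → P g → P (f.trans g) := by
    intro f g hf hg
    have hf' : IsSymmetry T (E.symm.trans (f.trans E)) := hf
    have hg' : IsSymmetry T (E.symm.trans (g.trans E)) := hg
    show IsSymmetry T (E.symm.trans ((f.trans g).trans E))
    have heq : E.symm.trans ((f.trans g).trans E)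
        = (E.symm.trans (f.trans E)).trans (E.symm.trans (g.trans E)) := by
      ext x
      simp [IsometryEquiv.trans_apply]
    rw [heq]
    exact isSymmetry_trans hf' hg'
  have hinv : ∀ f, P f → P f.symm := by
    intro f hf
    have hf' : IsSymmetry T (E.symm.trans (f.trans E)) := hf
    show IsSymmetry T (E.symm.trans (f.symm.trans E))
    have heq : E.symm.trans (f.symm.trans E) = (E.symm.trans (f.trans E)).symm := by
      ext x
      simp [IsometryEquiv.trans_apply, IsometryEquiv.symm_trans_apply]
    rw [heq]
    exact isSymmetry_symm hf'
  obtain ⟨Rb, hRb⟩ := ((hKc.image E.symm.continuous).isBounded).exists_norm_le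
  have hcover : ∀ z : ℂ, ∃ h, P h ∧ z ∈ ⇑h '' (⇑E.symm '' ⋃₀ R) := by
    intro z
    obtain ⟨f, hfs, x, hx, hfx⟩ := hcov (E z)
    refine ⟨E.trans (f.trans E.symm), ?_, ?_⟩
    · show IsSymmetry T (E.symm.trans ((E.trans (f.trans E.symm)).trans E))
      have heq : E.symm.trans ((E.trans (f.trans E.symm)).trans E) = f := by
        ext y; simp [IsometryEquiv.trans_apply]
      rwa [heq]
    · refine ⟨E.symm x, Set.mem_image_of_mem _ hx, ?_⟩
      simp only [IsometryEquiv.trans_apply]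
      rw [E.apply_symm_apply, hfx, E.symm_apply_apply]
  obtain ⟨v, w, hli, hPv, hPw⟩ := main_complex P hcomp hinv _ Rb hRb hcover
  have hEadd : ∀ (y : Plane) (z : ℂ), E (E.symm y + z) = y + eL z := by
    intro y z
    calc E (E.symm y + z) = eL (E.symm y) + eL z := map_add eL _ _
    _ = y + eL z := by rw [show eL (E.symm y) = y from E.apply_symm_apply y]
  have htrv : ∀ z : ℂ, P (tr z) → TransInv T (eL z) := by
    intro z hPz
    have hz' : IsSymmetry T (E.symm.trans ((tr z).trans E)) := hPz
    have heq : E.symm.trans ((tr z).trans E) = IsometryEquiv.addRight (eL z) := by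
      refine IsometryEquiv.ext fun x => ?_
      simp only [IsometryEquiv.trans_apply, IsometryEquiv.addRight_apply]
      exact hEadd x z
    rw [transInv_iff]
    rwa [heq] at hz'
  refine ⟨eL v, eL w, ?_, htrv v hPv, htrv w hPw⟩
  rw [LinearIndependent.pair_iff] at hli ⊢
  intro s t hst
  apply hli s t
  have h : eL (s • v + t • w) = 0 := by
    rw [map_add, map_smul, map_smul]; exact hst
  exact (eL.map_eq_zero_iff).1 h

end PeriodicAux

end PeriodicAuxSection

/-- a locally finite tiling by copies of a single compact tile is periodic
if and only if it has finitely many transitivity classes. -/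
theorem periodic_iff_finitely_many_classes (S : Set Plane) (T : Set (Set Plane))
    (hS : IsShape S) (hT : IsTiling S T) (hlf : LocFin T) :
    IsPeriodic T ↔ FinClasses T :=
  ⟨PeriodicAux.forward S T hS hT hlf, PeriodicAux.backward S T hS hT⟩
end

section
/- Every isohedral tiling of the plane by a compact tile is periodic: if the symmetry group of a locally finite tiling acts transitively on the tiles, then the symmetry group contains translations in two linearly independent directions. -/
open Set Metric

/-- A tiling is isohedral if its symmetry group acts transitively on the tiles. -/
def Isohedral (T : Set (Set Plane)) : Prop :=
  ∀ t ∈ T, ∀ u ∈ T, ∃ f : Plane ≃ᵢ Plane, IsSymmetry T f ∧ f '' t = u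

/-! ### Auxiliary material -/

lemma aux_conj_mul {a : ℂ} (ha : ‖a‖ = 1) : a * (starRingEnd ℂ) a = 1 := by
  rw [Complex.mul_conj]; norm_cast; rw [← Complex.sq_norm, ha]; norm_num

lemma aux_ne_zero {a : ℂ} (ha : ‖a‖ = 1) : a ≠ 0 := by
  intro h; simp [h] at ha

lemma aux_conj_inv {a : ℂ} (ha : ‖a‖ = 1) : (starRingEnd ℂ) a = a⁻¹ :=
  eq_inv_of_mul_eq_one_left (by rw [mul_comm]; exact aux_conj_mul ha)

lemma aux_class (f : ℂ ≃ᵢ ℂ) : ∃ a b : ℂ, ‖a‖ = 1 ∧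
    ((∀ z, f z = a * z + b) ∨ (∀ z, f z = a * (starRingEnd ℂ) z + b)) := by
  obtain ⟨a, ha | ha⟩ := linear_isometry_complex f.toRealLinearIsometryEquiv
  · refine ⟨a, f 0, Circle.norm_coe a, Or.inl fun z => ?_⟩
    have h1 := f.toRealLinearIsometryEquiv_apply z
    rw [ha, rotation_apply] at h1
    linear_combination -h1
  · refine ⟨a, f 0, Circle.norm_coe a, Or.inr fun z => ?_⟩
    have h1 := f.toRealLinearIsometryEquiv_apply z
    rw [ha] at h1
    rw [LinearIsometryEquiv.trans_apply, Complex.conjLIE_apply, rotation_apply] at h1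
    linear_combination -h1

lemma aux_symm_dir {g : ℂ ≃ᵢ ℂ} {c d : ℂ} (hc : c ≠ 0) (hg : ∀ z, g z = c * z + d) (w : ℂ) :
    g.symm w = (w - d) / c := by
  have h := hg (g.symm w)
  rw [g.apply_symm_apply] at h
  rw [eq_div_iff hc]
  linear_combination -h

lemma aux_symm_conj {g : ℂ ≃ᵢ ℂ} {c d : ℂ} (hc : ‖c‖ = 1)
    (hg : ∀ z, g z = c * (starRingEnd ℂ) z + d) (w : ℂ) :
    g.symm w = c * ((starRingEnd ℂ) w - (starRingEnd ℂ) d) := by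
  apply g.injective
  rw [g.apply_symm_apply, hg, map_mul, map_sub, Complex.conj_conj, Complex.conj_conj,
    aux_conj_inv hc]
  field_simp
  rw [mul_div_cancel_left₀ _ (aux_ne_zero hc)]
  ring

lemma aux_line_dist (v z w : ℂ) (hv : v ≠ 0) (t : ℝ) :
    |((w - z) / v).im| * ‖v‖ ≤ dist w (z + t * v) := by
  rw [Complex.dist_eq]
  have h1 : w - (z + t * v) = ((w - z) / v - t) * v := by field_simp; ring
  rw [h1, norm_mul]
  have h2 : |((w - z) / v - (t : ℂ)).im| ≤ ‖(w - z) / v - t‖ :=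
    Complex.abs_im_le_norm _
  have h3 : ((w - z) / v - (t : ℂ)).im = ((w - z) / v).im := by simp
  rw [h3] at h2
  exact mul_le_mul_of_nonneg_right h2 (norm_nonneg v)

lemma aux_far_parallel (u : ℂ) (hu : u ≠ 0) (z₁ z₂ : ℂ) (C : ℝ) :
    ∃ w : ℂ, (∀ t : ℝ, C < dist w (z₁ + t * u)) ∧ (∀ t : ℝ, C < dist w (z₂ + t * u)) := by
  have hr : 0 < ‖u‖ := norm_pos_iff.mpr hu
  set q : ℝ := ((z₁ - z₂) / u).im with hq
  set K : ℝ := |q| + (|C| + 1) / ‖u‖ with hK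
  have hdiv : (|C| + 1) / ‖u‖ * ‖u‖ = |C| + 1 :=
    div_mul_cancel₀ _ hr.ne'
  refine ⟨z₁ + (K : ℝ) * Complex.I * u, fun t => ?_, fun t => ?_⟩
  · refine lt_of_lt_of_le ?_ (aux_line_dist u z₁ _ hu t)
    have h1 : (z₁ + (K : ℝ) * Complex.I * u - z₁) / u = (K : ℝ) * Complex.I := by
      field_simp; ring
    rw [h1]
    have h2 : ((K : ℝ) * Complex.I : ℂ).im = K := by simp
    rw [h2]
    have h4 : C < K * ‖u‖ := by
      rw [hK]
      nlinarith [abs_nonneg q, le_abs_self C]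
    calc C < K * ‖u‖ := h4
    _ ≤ |K| * ‖u‖ := mul_le_mul_of_nonneg_right (le_abs_self K) (norm_nonneg u)
  · refine lt_of_lt_of_le ?_ (aux_line_dist u z₂ _ hu t)
    have h1 : (z₁ + (K : ℝ) * Complex.I * u - z₂) / u = (z₁ - z₂) / u + (K : ℝ) * Complex.I := by
      field_simp
      ring
    rw [h1]
    have h2 : ((z₁ - z₂) / u + (K : ℝ) * Complex.I).im = q + K := by simp [hq]
    rw [h2]
    have h4 : C < (q + K) * ‖u‖ := by
      rw [hK]
      nlinarith [neg_abs_le q, le_abs_self C]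
    calc C < (q + K) * ‖u‖ := h4
    _ ≤ |q + K| * ‖u‖ :=
      mul_le_mul_of_nonneg_right (le_abs_self _) (norm_nonneg u)

lemma aux_far_pencil (v₁ v₂ : ℂ) (h₁ : v₁ ≠ 0) (h₂ : v₂ ≠ 0) (p : ℂ) (C : ℝ) :
    ∃ w : ℂ, (∀ t : ℝ, C < dist w (p + t * v₁)) ∧ (∀ t : ℝ, C < dist w (p + t * v₂)) := by
  have hr₁ : 0 < ‖v₁‖ := norm_pos_iff.mpr h₁
  have hr₂ : 0 < ‖v₂‖ := norm_pos_iff.mpr h₂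
  set q : ℂ := v₁ / v₂ with hqdef
  have hq : q ≠ 0 := div_ne_zero h₁ h₂
  set c : ℝ := if q.re = 0 then 1 else 0 with hc
  have hval : q.re + c * q.im ≠ 0 := by
    by_cases h : q.re = 0
    · rw [hc, if_pos h, h, one_mul, zero_add]
      intro him
      exact hq (Complex.ext h him)
    · rw [hc, if_neg h, zero_mul, add_zero]; exact h
  set K : ℝ := (|C| + 1) * (1 / ‖v₁‖ + 1 / (|q.re + c * q.im| * ‖v₂‖))
    with hK
  have habsval : 0 < |q.re + c * q.im| := abs_pos.mpr hval
  refine ⟨p + (K : ℝ) * ((Complex.I + (c : ℝ)) * v₁), fun t => ?_, fun t => ?_⟩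
  · refine lt_of_lt_of_le ?_ (aux_line_dist v₁ p _ h₁ t)
    have h1 : (p + (K : ℝ) * ((Complex.I + (c : ℝ)) * v₁) - p) / v₁
        = (K : ℝ) * (Complex.I + (c : ℝ)) := by field_simp; ring
    rw [h1]
    have h2 : ((K : ℝ) * (Complex.I + (c : ℝ)) : ℂ).im = K := by simp
    rw [h2]
    have h4 : C < K * ‖v₁‖ := by
      rw [hK]
      have e1 : (|C| + 1) * (1 / ‖v₁‖) * ‖v₁‖ = |C| + 1 := by
        field_simp
      nlinarith [le_abs_self C, mul_pos habsval hr₂,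
        mul_pos (mul_pos (by positivity : (0:ℝ) < |C| + 1)
          (by positivity : (0:ℝ) < 1 / (|q.re + c * q.im| * ‖v₂‖))) hr₁]
    calc C < K * ‖v₁‖ := h4
    _ ≤ |K| * ‖v₁‖ := mul_le_mul_of_nonneg_right (le_abs_self K) (norm_nonneg _)
  · refine lt_of_lt_of_le ?_ (aux_line_dist v₂ p _ h₂ t)
    have h1 : (p + (K : ℝ) * ((Complex.I + (c : ℝ)) * v₁) - p) / v₂
        = (K : ℝ) * ((Complex.I + (c : ℝ)) * q) := by
      have e : p + (K : ℝ) * ((Complex.I + (c : ℝ)) * v₁) - p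
          = ((K : ℝ) * ((Complex.I + (c : ℝ)) * q)) * v₂ := by
        rw [hqdef]; field_simp; ring
      rw [e, mul_div_cancel_right₀ _ h₂]
    rw [h1]
    have h2 : ((K : ℝ) * ((Complex.I + (c : ℝ)) * q) : ℂ).im = K * (q.re + c * q.im) := by
      simp [Complex.mul_im, Complex.add_re, Complex.add_im]
      left; ring
    rw [h2]
    have hK0 : 0 < K := by
      rw [hK]
      have := one_div_pos.mpr hr₁
      have := one_div_pos.mpr (mul_pos habsval hr₂)
      positivity
    have h5 : (|C| + 1) / (|q.re + c * q.im| * ‖v₂‖) ≤ K := by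
      rw [hK, mul_add, mul_one_div, mul_one_div]
      have h6 : 0 ≤ (|C| + 1) / ‖v₁‖ := by positivity
      linarith
    have h7 : |C| + 1 ≤ K * (|q.re + c * q.im| * ‖v₂‖) := by
      have h8 := mul_le_mul_of_nonneg_right h5 (le_of_lt (mul_pos habsval hr₂))
      rwa [div_mul_cancel₀ _ (mul_pos habsval hr₂).ne'] at h8
    rw [abs_mul, abs_of_pos hK0]
    nlinarith [le_abs_self C]

lemma aux_sym_congr {T : Set (Set Plane)} {f g : Plane ≃ᵢ Plane} (h : IsSymmetry T f)
    (hfg : ∀ p, f p = g p) : IsSymmetry T g := by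
  unfold IsSymmetry at *
  have : (fun t : Set Plane => g '' t) = (fun t => f '' t) := by
    funext t; exact Set.image_congr' (fun x => (hfg x).symm)
  rw [this, h]

lemma aux_sym_trans {T : Set (Set Plane)} {f g : Plane ≃ᵢ Plane} (hf : IsSymmetry T f)
    (hg : IsSymmetry T g) : IsSymmetry T (f.trans g) := by
  unfold IsSymmetry at *
  have h1 : (fun t : Set Plane => (f.trans g) '' t) '' T
      = (fun t : Set Plane => g '' t) '' ((fun t : Set Plane => f '' t) '' T) := by
    rw [Set.image_image]
    refine Set.image_congr' (fun t => ?_)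
    ext x
    simp [IsometryEquiv.trans_apply]
  rw [h1, hf, hg]

lemma aux_sym_symm {T : Set (Set Plane)} {f : Plane ≃ᵢ Plane} (hf : IsSymmetry T f) :
    IsSymmetry T f.symm := by
  unfold IsSymmetry at *
  conv_lhs => rw [← hf]
  rw [Set.image_image]
  have : (fun t : Set Plane => f.symm '' (f '' t)) = fun t => t := by
    funext t; rw [← Set.image_comp]; simp
  rw [this, Set.image_id']

lemma aux_transInv {T : Set (Set Plane)} {f : Plane ≃ᵢ Plane} {v : Plane}
    (hf : IsSymmetry T f) (hv : ∀ p, f p = p + v) : TransInv T v := by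
  unfold TransInv
  unfold IsSymmetry at hf
  have : (fun t : Set Plane => (fun p => p + v) '' t) = (fun t => f '' t) := by
    funext t; exact Set.image_congr' (fun x => (hv x).symm)
  rw [this, hf]

noncomputable def planeEquiv : ℂ ≃ₗᵢ[ℝ] Plane :=
  Complex.isometryOfOrthonormal (EuclideanSpace.basisFun (Fin 2) ℝ)

noncomputable def planeIso : ℂ ≃ᵢ Plane := planeEquiv.toIsometryEquiv

@[simp] lemma planeIso_apply (z : ℂ) : planeIso z = planeEquiv z := rfl
@[simp] lemma planeIso_symm_apply (p : Plane) : planeIso.symm p = planeEquiv.symm p := rfl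

noncomputable def conjE (f : ℂ ≃ᵢ ℂ) : Plane ≃ᵢ Plane :=
  (planeIso.symm.trans f).trans planeIso

@[simp] lemma conjE_apply (f : ℂ ≃ᵢ ℂ) (p : Plane) :
    conjE f p = planeEquiv (f (planeEquiv.symm p)) := rfl

def InG (T : Set (Set Plane)) (f : ℂ ≃ᵢ ℂ) : Prop := IsSymmetry T (conjE f)

lemma inG_trans {T : Set (Set Plane)} {f g : ℂ ≃ᵢ ℂ} (hf : InG T f) (hg : InG T g) :
    InG T (f.trans g) := by
  unfold InG at *
  apply aux_sym_congr (aux_sym_trans hf hg)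
  intro p
  simp [IsometryEquiv.trans_apply]

lemma inG_symm {T : Set (Set Plane)} {f : ℂ ≃ᵢ ℂ} (hf : InG T f) : InG T f.symm := by
  unfold InG at *
  apply aux_sym_congr (aux_sym_symm hf)
  intro p
  rw [IsometryEquiv.symm_apply_eq]
  simp

lemma aux_indep_map {v w : ℂ} (h : LinearIndependent ℝ ![v, w]) :
    LinearIndependent ℝ ![planeEquiv v, planeEquiv w] := by
  have h2 := h.map' planeEquiv.toLinearEquiv.toLinearMap planeEquiv.toLinearEquiv.ker
  have heq : (⇑planeEquiv.toLinearEquiv.toLinearMap ∘ ![v, w])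
      = ![planeEquiv v, planeEquiv w] := by
    funext i; fin_cases i <;> rfl
  rwa [heq] at h2

/-- every locally finite isohedral tiling by a compact tile is periodic. -/
theorem isohedral_implies_periodic (S : Set Plane) (T : Set (Set Plane))
    (hS : IsShape S) (hT : IsTiling S T) (hlf : LocFin T) (hiso : Isohedral T) :
    IsPeriodic T := by
  classical
  by_contra hnp
  obtain ⟨hcount, hcopy, hcover, hdisj⟩ := hT
  have h0 : (0 : Plane) ∈ ⋃₀ T := by rw [hcover]; trivial
  obtain ⟨t₀, ht₀T, hx₀⟩ := h0
  set z₀ : ℂ := planeEquiv.symm 0 with hz₀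
  set D := Metric.diam S with hD
  -- density of the orbit of z₀
  have hdens : ∀ z : ℂ, ∃ g : ℂ ≃ᵢ ℂ, InG T g ∧ dist (g z₀) z ≤ D := by
    intro z
    have hz : planeEquiv z ∈ ⋃₀ T := by rw [hcover]; trivial
    obtain ⟨tu, htuT, hmem⟩ := hz
    obtain ⟨f', hsym, himg⟩ := hiso t₀ ht₀T tu htuT
    refine ⟨(planeIso.trans f').trans planeIso.symm, ?_, ?_⟩
    · show IsSymmetry T _
      apply aux_sym_congr hsym
      intro p
      simp [conjE, IsometryEquiv.trans_apply]
    · have hval : ((planeIso.trans f').trans planeIso.symm) z₀ = planeEquiv.symm (f' 0) := by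
        simp [IsometryEquiv.trans_apply, hz₀]
      rw [hval]
      have hfx : f' 0 ∈ tu := by rw [← himg]; exact Set.mem_image_of_mem _ hx₀
      obtain ⟨fc, hfc⟩ := hcopy tu htuT
      have hbd : Bornology.IsBounded tu := by
        rw [hfc]; exact (hS.1.image fc.continuous).isBounded
      have hdiam : Metric.diam tu = D := by
        rw [hfc, IsometryEquiv.diam_image, hD]
      have h5 : dist (planeEquiv.symm (f' 0)) z = dist (f' 0) (planeEquiv z) := by
        have h6 := planeIso.symm.dist_eq (f' 0) (planeIso z)
        simpa using h6
      rw [h5, ← hdiam]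
      exact Metric.dist_le_diam_of_mem hbd hfx hmem
  -- translations in the symmetry group are pairwise dependent
  have hpair : ∀ v w : ℂ, (∃ m, InG T m ∧ ∀ z, m z = z + v) →
      (∃ m, InG T m ∧ ∀ z, m z = z + w) → ¬ LinearIndependent ℝ ![v, w] := by
    rintro v w ⟨m, hmG, hm⟩ ⟨m', hm'G, hm'⟩ hind
    apply hnp
    refine ⟨planeEquiv v, planeEquiv w, aux_indep_map hind, ?_, ?_⟩
    · exact aux_transInv hmG (fun p => by simp [hm, map_add])
    · exact aux_transInv hm'G (fun p => by simp [hm', map_add])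
  -- all translation vectors lie on a line through the origin
  have hlineE : ∃ u : ℂ, u ≠ 0 ∧ ∀ (m : ℂ ≃ᵢ ℂ), InG T m → ∀ v : ℂ,
      (∀ z, m z = z + v) → ∃ t : ℝ, v = (t : ℂ) * u := by
    by_cases htr : ∀ v : ℂ, (∃ m, InG T m ∧ ∀ z, m z = z + v) → v = 0
    · refine ⟨1, one_ne_zero, fun m hmG v hv => ⟨0, ?_⟩⟩
      rw [htr v ⟨m, hmG, hv⟩]; simp
    · push_neg at htr
      obtain ⟨v₀, hv₀ex, hv₀ne⟩ := htr
      refine ⟨v₀, hv₀ne, fun m hmG v hv => ?_⟩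
      have hni := hpair v v₀ ⟨m, hmG, hv⟩ hv₀ex
      rw [linearIndependent_fin2] at hni
      push_neg at hni
      simp only [Matrix.cons_val_zero, Matrix.cons_val_one, Matrix.head_cons] at hni
      obtain ⟨a, ha⟩ := hni hv₀ne
      exact ⟨a, by rw [← ha, Complex.real_smul]⟩
  obtain ⟨u, hu, hline⟩ := hlineE
  by_cases hrot : ∃ f : ℂ ≃ᵢ ℂ, InG T f ∧ ∃ a b : ℂ, ‖a‖ = 1 ∧
      (∀ z, f z = a * z + b) ∧ a ≠ 1
  · -- Case 1: there is a genuine rotation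
    obtain ⟨f, hfG, a, b, habs, hf, ha1⟩ := hrot
    have ha0 : a ≠ 0 := aux_ne_zero habs
    have h1a : (1 : ℂ) - a ≠ 0 := sub_ne_zero.mpr (Ne.symm ha1)
    have hconja : (starRingEnd ℂ) a = a⁻¹ := aux_conj_inv habs
    have h1abar : (1 : ℂ) - a⁻¹ ≠ 0 := by
      intro h
      apply h1a
      have h2 : ((starRingEnd ℂ) ((1 : ℂ) - a⁻¹)) = 0 := by rw [h]; simp
      rw [map_sub, map_one, map_inv₀, hconja] at h2
      rwa [inv_inv] at h2
    set p : ℂ := b / (1 - a) with hp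
    have hpb : b = (1 - a) * p := by
      rw [hp, mul_div_cancel₀ _ h1a]
    clear_value p
    set v₁ : ℂ := u / (1 - a) with hv₁def
    set v₂ : ℂ := u / (1 - a⁻¹) with hv₂def
    have hv₁ : v₁ ≠ 0 := div_ne_zero hu h1a
    have hv₂ : v₂ ≠ 0 := div_ne_zero hu h1abar
    have hkey : ∀ g : ℂ ≃ᵢ ℂ, InG T g →
        (∃ t : ℝ, g p = p + (t : ℂ) * v₁) ∨ (∃ t : ℝ, g p = p + (t : ℂ) * v₂) := by
      intro g hgG
      obtain ⟨c, d, hcabs, hcase⟩ := aux_class g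
      have hc0 : c ≠ 0 := aux_ne_zero hcabs
      rcases hcase with hgdir | hgconj
      · left
        set m := f.symm.trans ((g.symm.trans f).trans g) with hm
        have hmG : InG T m :=
          inG_trans (inG_symm hfG) (inG_trans (inG_trans (inG_symm hgG) hfG) hgG)
        have hmz : ∀ z, m z = z + ((c - 1) * b + (1 - a) * d) := by
          intro z
          rw [hm]
          simp only [IsometryEquiv.trans_apply]
          rw [aux_symm_dir ha0 hf, aux_symm_dir hc0 hgdir, hf, hgdir]
          field_simp
          ring
        obtain ⟨t, ht⟩ := hline m hmG _ hmz
        refine ⟨t, ?_⟩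
        rw [hgdir p, hv₁def]
        have e1 : (t : ℂ) * (u / (1 - a)) = ((t : ℂ) * u) / (1 - a) := by ring
        rw [e1, ← ht, hpb]
        field_simp
        ring
      · right
        set m := f.trans ((g.symm.trans f).trans g) with hm
        have hmG : InG T m :=
          inG_trans hfG (inG_trans (inG_trans (inG_symm hgG) hfG) hgG)
        have hconjc : (starRingEnd ℂ) c = c⁻¹ := aux_conj_inv hcabs
        have hmz : ∀ z, m z = z + (a⁻¹ * b + c * (starRingEnd ℂ) b + (1 - a⁻¹) * d) := by
          intro z
          rw [hm]
          simp only [IsometryEquiv.trans_apply]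
          rw [hf, aux_symm_conj hcabs hgconj, hf, hgconj]
          simp only [map_add, map_mul, map_sub, Complex.conj_conj]
          rw [hconja, hconjc]
          field_simp
          ring
        obtain ⟨t, ht⟩ := hline m hmG _ hmz
        refine ⟨t, ?_⟩
        have hpbar : (starRingEnd ℂ) b = (1 - a⁻¹) * (starRingEnd ℂ) p := by
          rw [hpb, map_mul, map_sub, map_one, hconja]
        rw [hgconj p, hv₂def]
        have e1 : (t : ℂ) * (u / (1 - a⁻¹)) = ((t : ℂ) * u) / (1 - a⁻¹) := by ring
        rw [e1, ← ht, hpbar, hpb]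
        have hm1a : (-1 : ℂ) + a ≠ 0 := fun h => h1a (by linear_combination -h)
        have hX : ((-1 : ℂ) + a) * ((-1 : ℂ) + a)⁻¹ = 1 := mul_inv_cancel₀ hm1a
        field_simp
        ring
    obtain ⟨w, hw₁, hw₂⟩ := aux_far_pencil v₁ v₂ hv₁ hv₂ p (D + dist z₀ p)
    obtain ⟨g, hgG, hgd⟩ := hdens w
    have hdist : dist w (g p) ≤ D + dist z₀ p := by
      calc dist w (g p) ≤ dist w (g z₀) + dist (g z₀) (g p) := dist_triangle _ _ _
      _ = dist w (g z₀) + dist z₀ p := by rw [g.dist_eq]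
      _ ≤ D + dist z₀ p := by rw [dist_comm w (g z₀)]; linarith
    rcases hkey g hgG with ⟨t, hgp⟩ | ⟨t, hgp⟩
    · have hcon := hw₁ t; rw [← hgp] at hcon; linarith
    · have hcon := hw₂ t; rw [← hgp] at hcon; linarith
  · -- Case 2: all direct symmetries are translations
    push_neg at hrot
    have hmain : ∃ z₂ : ℂ, ∀ g : ℂ ≃ᵢ ℂ, InG T g →
        (∃ t : ℝ, g z₀ = z₀ + (t : ℂ) * u) ∨ (∃ t : ℝ, g z₀ = z₂ + (t : ℂ) * u) := by
      by_cases hrev : ∃ h₀ : ℂ ≃ᵢ ℂ, InG T h₀ ∧ ∃ c₀ d₀ : ℂ, ‖c₀‖ = 1 ∧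
          ∀ z, h₀ z = c₀ * (starRingEnd ℂ) z + d₀
      · obtain ⟨h₀, hh₀G, c₀, d₀, hc₀abs, hh₀⟩ := hrev
        refine ⟨h₀ z₀, fun g hgG => ?_⟩
        obtain ⟨c, d, hcabs, hcase⟩ := aux_class g
        rcases hcase with hgdir | hgconj
        · left
          have hc1 : c = 1 := hrot g hgG c d hcabs hgdir
          rw [hc1] at hgdir
          have hgz : ∀ z, g z = z + d := fun z => by rw [hgdir z]; ring
          obtain ⟨t, ht⟩ := hline g hgG d hgz
          exact ⟨t, by rw [hgz z₀, ht]⟩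
        · right
          set m := h₀.symm.trans g with hmdef
          have hmG : InG T m := inG_trans (inG_symm hh₀G) hgG
          have hmz : ∀ z, m z = (c * (starRingEnd ℂ) c₀) * z
              + (d - (c * (starRingEnd ℂ) c₀) * d₀) := by
            intro z
            rw [hmdef]
            simp only [IsometryEquiv.trans_apply]
            rw [aux_symm_conj hc₀abs hh₀, hgconj]
            simp only [map_mul, map_sub, Complex.conj_conj]
            ring
          have habsm : ‖c * (starRingEnd ℂ) c₀‖ = 1 := by
            rw [norm_mul, Complex.norm_conj, hcabs, hc₀abs]; norm_num
          have hcc : c * (starRingEnd ℂ) c₀ = 1 := hrot m hmG _ _ habsm hmz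
          have hc₀c : c = c₀ := by
            have h2 := aux_conj_mul hc₀abs
            have hconj0 : (starRingEnd ℂ) c₀ ≠ 0 := by
              simpa using aux_ne_zero hc₀abs
            exact mul_right_cancel₀ hconj0 (hcc.trans h2.symm)
          have hmz' : ∀ z, m z = z + (d - d₀) := by
            intro z; rw [hmz z, hcc]; ring
          obtain ⟨t, ht⟩ := hline m hmG _ hmz'
          refine ⟨t, ?_⟩
          rw [hgconj z₀, hh₀ z₀, hc₀c, ← ht]
          ring
      · refine ⟨z₀, fun g hgG => Or.inl ?_⟩
        obtain ⟨c, d, hcabs, hcase⟩ := aux_class g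
        rcases hcase with hgdir | hgconj
        · have hc1 : c = 1 := hrot g hgG c d hcabs hgdir
          rw [hc1] at hgdir
          have hgz : ∀ z, g z = z + d := fun z => by rw [hgdir z]; ring
          obtain ⟨t, ht⟩ := hline g hgG d hgz
          exact ⟨t, by rw [hgz z₀, ht]⟩
        · exact absurd ⟨g, hgG, c, d, hcabs, hgconj⟩ hrev
    obtain ⟨z₂, hmain⟩ := hmain
    obtain ⟨w, hw₁, hw₂⟩ := aux_far_parallel u hu z₀ z₂ D
    obtain ⟨g, hgG, hgd⟩ := hdens w
    have hdist : dist w (g z₀) ≤ D := by rw [dist_comm]; exact hgd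
    rcases hmain g hgG with ⟨t, hgp⟩ | ⟨t, hgp⟩
    · have hcon := hw₁ t; rw [← hgp] at hcon; linarith
    · have hcon := hw₂ t; rw [← hgp] at hcon; linarith
end

section
/- An n-patch of a shape S contains a disk of radius at least n·r centered at the central copy, where r > 0 is the inradius-derived constant such that surrounding a region pushes the boundary out by at least r. -/
open Set Metric

/-- A patch: a finite nonempty collection of copies of `S` with pairwise disjoint interiors. -/
def IsPatch (S : Set Plane) (Q : Set (Set Plane)) : Prop :=
  Q.Finite ∧ Q.Nonempty ∧ (∀ t ∈ Q, IsCopy S t) ∧ PairwiseDisjointInteriors Q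

/-- The patch `P` extends the patch `Q` by surrounding it: the added copies of `S` put `Q`
in the interior of the union, and each added copy touches `Q`. -/
def SurroundsPatch (S : Set Plane) (Q P : Set (Set Plane)) : Prop :=
  Q ⊆ P ∧ IsPatch S P ∧ ⋃₀ Q ⊆ interior (⋃₀ P) ∧
    ∀ p ∈ P \ Q, (frontier p ∩ frontier (⋃₀ Q)).Nonempty

/-- `n`-patches of `S`, defined by iterated surrounding of a single central copy. -/
def IsNPatch (S : Set Plane) : ℕ → Set (Set Plane) → Prop
  | 0, P => ∃ t, IsCopy S t ∧ P = {t}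
  | n + 1, P => ∃ Q, IsNPatch S n Q ∧ SurroundsPatch S Q P

/-- The Heesch number of `S`: the supremum of `n` such that `S` has an `n`-patch. -/
noncomputable def HeeschNumber (S : Set Plane) : ℕ∞ :=
  ⨆ n ∈ {n : ℕ | ∃ P, IsNPatch S n P}, (n : ℕ∞)

/-- A preconnected set meeting a set and its complement meets the frontier. -/
lemma crossing_lemma {α : Type*} [TopologicalSpace α] {s A : Set α} (hs : IsPreconnected s)
    {a b : α} (ha : a ∈ s) (haA : a ∈ A) (hb : b ∈ s) (hbA : b ∉ A) :
    (s ∩ frontier A).Nonempty := by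
  by_contra h
  rw [not_nonempty_iff_eq_empty] at h
  have hfr : ∀ z ∈ s, z ∉ frontier A := by
    intro z hz hzf
    exact absurd (mem_inter hz hzf) (by rw [h]; exact notMem_empty z)
  have hsub : s ⊆ interior A ∪ (closure A)ᶜ := by
    intro z hz
    by_cases hzA : z ∈ closure A
    · exact Or.inl (by_contra fun hzi => hfr z hz ⟨hzA, hzi⟩)
    · exact Or.inr hzA
  have h1 : (s ∩ interior A).Nonempty :=
    ⟨a, ha, by_contra fun hai => hfr a ha ⟨subset_closure haA, hai⟩⟩
  have h2 : (s ∩ (closure A)ᶜ).Nonempty :=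
    ⟨b, hb, fun hbc => hbA (by_contra fun _ => hbA (by_contra fun h' =>
      (hfr b hb ⟨hbc, fun hi => hbA (interior_subset hi)⟩)))⟩
  obtain ⟨z, _, hzi, hzc⟩ :=
    hs (interior A) (closure A)ᶜ isOpen_interior isClosed_closure.isOpen_compl hsub h1 h2
  exact hzc (subset_closure (interior_subset hzi))

/-- Extract the chain of intermediate patches from an `n`-patch. -/
lemma npatch_chain (S : Set Plane) : ∀ n Q, IsNPatch S n Q →
    ∃ c : ℕ → Set (Set Plane), c n = Q ∧ (∃ t, IsCopy S t ∧ c 0 = {t}) ∧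
      ∀ k < n, SurroundsPatch S (c k) (c (k + 1)) := by
  intro n
  induction n with
  | zero =>
    intro Q h
    exact ⟨fun _ => Q, rfl, h, fun k hk => absurd hk (Nat.not_lt_zero k)⟩
  | succ n ih =>
    intro Q h
    obtain ⟨Q', hQ', hsur⟩ := h
    obtain ⟨c, hc, h0, hstep⟩ := ih Q' hQ'
    refine ⟨fun k => if k ≤ n then c k else Q, by simp, by simpa using h0, ?_⟩
    intro k hk
    rcases Nat.lt_succ_iff_lt_or_eq.mp hk with h' | h'
    · have e1 : k ≤ n := h'.le
      have e2 : k + 1 ≤ n := h'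
      simpa [e1, e2] using hstep k h'
    · subst h'
      simpa [hc] using hsur

set_option maxHeartbeats 1000000 in
/-- if the compact disk `S` contains a closed ball of positive radius, then
there is a `δ > 0` (depending only on `S`) such that the union of any `n`-patch of `S`
contains a closed disk of radius `n·δ` centered at a point of the central copy. -/
theorem npatch_contains_large_disk (S : Set Plane) (hS : IsShape S)
    (x₀ : Plane) (r : ℝ) (hr : 0 < r) (hball : closedBall x₀ r ⊆ S) :
    ∃ δ > (0 : ℝ), ∀ n : ℕ, ∀ Q : Set (Set Plane), IsNPatch S n Q →
      ∃ t ∈ Q, ∃ x ∈ t, closedBall x ((n : ℝ) * δ) ⊆ ⋃₀ Q := by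
  classical
  set D : ℝ := Metric.diam S with hD
  have hD0 : 0 ≤ D := Metric.diam_nonneg
  set R1 : ℝ := D + 2 * r with hR1def
  have hR1 : 0 < R1 := by positivity
  refine ⟨r ^ 3 / (4 * R1 ^ 2), by positivity, ?_⟩
  set δ : ℝ := r ^ 3 / (4 * R1 ^ 2) with hδdef
  intro n Q hQ
  obtain ⟨c, hc, ⟨t₀, ⟨f, hf⟩, hc0⟩, hstep⟩ := npatch_chain S n Q hQ
  -- monotonicity of the chain
  have hmono : ∀ m, m ≤ n → ∀ k, k ≤ m → c k ⊆ c m := by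
    intro m
    induction m with
    | zero => intro _ k hk; rw [Nat.le_zero.mp hk]
    | succ m ihm =>
      intro hm k hk
      rcases Nat.lt_succ_iff_lt_or_eq.mp (Nat.lt_succ_of_le hk) with h' | h'
      · exact (ihm (by omega) k (by omega)).trans (hstep m (by omega)).1
      · subst h'; exact fun _ h => h
  have tile_compact : ∀ t : Set Plane, IsCopy S t → IsCompact t := by
    rintro t ⟨g, rfl⟩
    exact hS.1.image g.continuous
  set x : Plane := f x₀ with hx_def
  have hxball : closedBall x r ⊆ t₀ := by
    rw [hf, ← f.image_closedBall]
    exact image_mono hball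
  have hx : x ∈ t₀ := hxball (mem_closedBall_self hr.le)
  have ht₀0 : t₀ ∈ c 0 := by rw [hc0]; exact rfl
  have ht₀Q : t₀ ∈ Q := by rw [← hc]; exact hmono n le_rfl 0 (Nat.zero_le n) ht₀0
  refine ⟨t₀, ht₀Q, x, hx, ?_⟩
  intro y hy
  by_contra hyQ
  set L : ℝ := dist x y with hLdef
  have hL0 : 0 ≤ L := dist_nonneg
  have hyx : dist y x ≤ (n : ℝ) * δ := mem_closedBall.mp hy
  have hLnδ : L ≤ (n : ℝ) * δ := by rwa [hLdef, dist_comm]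
  have hLr : r < L := by
    by_contra hcon
    push_neg at hcon
    exact hyQ ⟨t₀, ht₀Q, hxball (by rwa [mem_closedBall, dist_comm])⟩
  rcases Nat.eq_zero_or_pos n with hn0 | hn
  · rw [hn0] at hLnδ
    simp at hLnδ
    nlinarith
  -- main case: n ≥ 1
  have hQpatch : IsPatch S Q := by
    have := (hstep (n - 1) (by omega)).2.1
    have e : n - 1 + 1 = n := by omega
    rwa [e, hc] at this
  -- data for each layer
  have main : ∀ k : ℕ, ∃ τ : Set Plane, ∃ p w : Plane, 1 ≤ k → k ≤ n →
      τ ∈ c k ∧ τ ∉ c (k - 1) ∧ closedBall p r ⊆ τ ∧ w ∈ segment ℝ x y ∧ dist p w ≤ D := by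
    intro k
    by_cases hk : 1 ≤ k ∧ k ≤ n
    · obtain ⟨hk1, hk2⟩ := hk
      have hpatch : IsPatch S (c k) := by
        have := (hstep (k - 1) (by omega)).2.1
        have e : k - 1 + 1 = k := by omega
        rwa [e] at this
      have hclosedk : IsClosed (⋃₀ c k) := by
        rw [sUnion_eq_biUnion]
        exact hpatch.1.isClosed_biUnion fun t ht =>
          (tile_compact t (hpatch.2.2.1 t ht)).isClosed
      have hxk : x ∈ ⋃₀ c k := ⟨t₀, hmono k hk2 0 (Nat.zero_le k) ht₀0, hx⟩
      have hyk : y ∉ ⋃₀ c k := fun ⟨t, ht, hyt⟩ => hyQ ⟨t, hc ▸ hmono n le_rfl k hk2 ht, hyt⟩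
      obtain ⟨w, hwseg, hwf⟩ := crossing_lemma (convex_segment x y).isPreconnected
        (left_mem_segment ℝ x y) hxk (right_mem_segment ℝ x y) hyk
      have hwA : w ∈ ⋃₀ c k := hclosedk.frontier_subset hwf
      obtain ⟨τ, hτk, hwτ⟩ := hwA
      have hτnot : τ ∉ c (k - 1) := by
        intro hmem
        have hsurr := hstep (k - 1) (by omega)
        have hint : w ∈ interior (⋃₀ c (k - 1 + 1)) := hsurr.2.2.1 ⟨τ, hmem, hwτ⟩
        have e : k - 1 + 1 = k := by omega
        rw [e] at hint
        exact hwf.2 hint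
      obtain ⟨g, hg⟩ := hpatch.2.2.1 τ hτk
      refine ⟨τ, g x₀, w, fun _ _ => ⟨hτk, hτnot, ?_, hwseg, ?_⟩⟩
      · rw [hg, ← g.image_closedBall]
        exact image_mono hball
      · have hgx : g x₀ ∈ τ := by
          rw [hg]
          exact ⟨x₀, hball (mem_closedBall_self hr.le), rfl⟩
        calc dist (g x₀) w ≤ Metric.diam τ :=
              dist_le_diam_of_mem (tile_compact τ ⟨g, hg⟩).isBounded hgx hwτ
          _ = D := by rw [hg, g.isometry.diam_image]
    · exact ⟨∅, x, x, fun h1 h2 => absurd ⟨h1, h2⟩ hk⟩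
  choose τ p w hmain using main
  -- the chosen tiles are distinct
  have hτQ : ∀ k, 1 ≤ k → k ≤ n → τ k ∈ Q := fun k h1 h2 =>
    hc ▸ hmono n le_rfl k h2 (hmain k h1 h2).1
  have hdistinct : ∀ j k, 1 ≤ j → j < k → k ≤ n → τ j ≠ τ k := by
    intro j k hj hjk hk heq
    apply (hmain k (by omega) hk).2.1
    rw [← heq]
    exact hmono (k - 1) (by omega) j (by omega) (hmain j hj (by omega)).1
  have hballdisj : ∀ j k, 1 ≤ j → j ≤ n → 1 ≤ k → k ≤ n → j ≠ k →
      Disjoint (ball (p j) r) (ball (p k) r) := by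
    intro j k hj1 hj2 hk1 hk2 hjk
    have hne : τ j ≠ τ k := by
      rcases Nat.lt_or_ge j k with h' | h'
      · exact hdistinct j k hj1 h' hk2
      · exact (hdistinct k j hk1 (by omega) hj2).symm
    have hint := hQpatch.2.2.2 (τ j) (hτQ j hj1 hj2) (τ k) (hτQ k hk1 hk2) hne
    have hbj : ball (p j) r ⊆ interior (τ j) :=
      interior_maximal (ball_subset_closedBall.trans (hmain j hj1 hj2).2.2.1) isOpen_ball
    have hbk : ball (p k) r ⊆ interior (τ k) :=
      interior_maximal (ball_subset_closedBall.trans (hmain k hk1 hk2).2.2.1) isOpen_ball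
    exact Set.disjoint_of_subset hbj hbk (Set.disjoint_iff_inter_eq_empty.mpr hint)
  -- covering balls along the segment
  set N : ℕ := ⌊L / r⌋₊ with hNdef
  set g : ℕ → Plane := fun i => x + (((i : ℝ) * r) / L) • (y - x) with hgdef
  have hLpos : 0 < L := lt_trans hr hLr
  have hnorm_yx : ‖y - x‖ = L := by rw [hLdef, dist_eq_norm, norm_sub_rev]
  have hcover : (⋃ k ∈ Finset.Icc 1 n, ball (p k) r) ⊆
      ⋃ i ∈ Finset.range (N + 1), ball (g i) R1 := by
    intro z hz
    simp only [Finset.mem_Icc, mem_iUnion, exists_prop] at hz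
    obtain ⟨k, ⟨hk1, hk2⟩, hzk⟩ := hz
    obtain ⟨_, _, _, hwseg, hpw⟩ := hmain k hk1 hk2
    rw [segment_eq_image'] at hwseg
    obtain ⟨t, ⟨ht0, ht1⟩, hteq⟩ := hwseg
    have htL : t * L ≤ L := by nlinarith
    have htL0 : 0 ≤ t * L := by positivity
    set i : ℕ := ⌊t * L / r⌋₊ with hidef
    have hiN : i ≤ N := Nat.floor_mono (by gcongr)
    have hir : (i : ℝ) * r ≤ t * L := by
      have := Nat.floor_le (by positivity : (0:ℝ) ≤ t * L / r)
      calc (i : ℝ) * r ≤ t * L / r * r := by nlinarith [this]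
        _ = t * L := by field_simp
    have hir2 : t * L < (i : ℝ) * r + r := by
      have := Nat.lt_floor_add_one (t * L / r)
      have h2 : t * L / r * r < ((i : ℝ) + 1) * r := by
        apply mul_lt_mul_of_pos_right this hr
      rw [div_mul_cancel₀ _ hr.ne'] at h2
      linarith
    have hwg : dist (w k) (g i) < r := by
      have heq2 : w k - g i = (t - (i : ℝ) * r / L) • (y - x) := by
        rw [← hteq, hgdef]
        simp only [sub_smul]
        abel
      rw [dist_eq_norm, heq2, norm_smul, hnorm_yx, Real.norm_eq_abs]
      rw [abs_of_nonneg (by rw [sub_nonneg, div_le_iff₀ hLpos]; linarith)]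
      rw [sub_mul, div_mul_cancel₀ _ hLpos.ne']
      linarith
    simp only [Finset.mem_range, mem_iUnion, exists_prop]
    refine ⟨i, by omega, ?_⟩
    have hzp : dist z (p k) < r := mem_ball.mp hzk
    calc dist z (g i) ≤ dist z (p k) + dist (p k) (w k) + dist (w k) (g i) :=
          dist_triangle4 z (p k) (w k) (g i)
      _ < r + D + r := by linarith
      _ = R1 := by rw [hR1def]; ring
  -- measure comparison
  set V : ENNReal := MeasureTheory.volume (ball (0 : Plane) 1) with hVdef
  have hV0 : V ≠ 0 := (measure_ball_pos MeasureTheory.volume 0 one_pos).ne'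
  have hVtop : V ≠ ⊤ := MeasureTheory.measure_ball_lt_top.ne
  have hvol : ∀ (z : Plane) (ρ : ℝ), 0 < ρ →
      MeasureTheory.volume (ball z ρ) = ENNReal.ofReal (ρ ^ 2) * V := by
    intro z ρ hρ
    rw [MeasureTheory.Measure.addHaar_ball_of_pos MeasureTheory.volume z hρ,
      finrank_euclideanSpace_fin]
  have hdisjF : (↑(Finset.Icc 1 n) : Set ℕ).PairwiseDisjoint fun k => ball (p k) r := by
    intro j hj k hk hjk
    simp only [Finset.coe_Icc, mem_Icc] at hj hk
    exact hballdisj j k hj.1 hj.2 hk.1 hk.2 hjk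
  have hsum : ∑ k ∈ Finset.Icc 1 n, MeasureTheory.volume (ball (p k) r)
      = MeasureTheory.volume (⋃ k ∈ Finset.Icc 1 n, ball (p k) r) :=
    (MeasureTheory.measure_biUnion_finset hdisjF fun k _ => measurableSet_ball).symm
  have hle : MeasureTheory.volume (⋃ k ∈ Finset.Icc 1 n, ball (p k) r)
      ≤ ∑ i ∈ Finset.range (N + 1), MeasureTheory.volume (ball (g i) R1) :=
    le_trans (MeasureTheory.measure_mono hcover) (MeasureTheory.measure_biUnion_finset_le _ _)
  have hcount : (n : ENNReal) * (ENNReal.ofReal (r ^ 2) * V)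
      ≤ ((N : ENNReal) + 1) * (ENNReal.ofReal (R1 ^ 2) * V) := by
    calc (n : ENNReal) * (ENNReal.ofReal (r ^ 2) * V)
        = ∑ k ∈ Finset.Icc 1 n, MeasureTheory.volume (ball (p k) r) := by
          rw [Finset.sum_congr rfl fun k _ => hvol (p k) r hr, Finset.sum_const,
            Nat.card_Icc, nsmul_eq_mul]
          simp
      _ ≤ ∑ i ∈ Finset.range (N + 1), MeasureTheory.volume (ball (g i) R1) := hsum ▸ hle
      _ = ((N : ENNReal) + 1) * (ENNReal.ofReal (R1 ^ 2) * V) := by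
          rw [Finset.sum_congr rfl fun i _ => hvol (g i) R1 hR1, Finset.sum_const,
            Finset.card_range, nsmul_eq_mul]
          simp
  rw [← mul_assoc, ← mul_assoc] at hcount
  have hcount2 : (n : ENNReal) * ENNReal.ofReal (r ^ 2)
      ≤ ((N : ENNReal) + 1) * ENNReal.ofReal (R1 ^ 2) :=
    (ENNReal.mul_le_mul_iff_left hV0 hVtop).mp hcount
  have hreal : (n : ℝ) * r ^ 2 ≤ ((N : ℝ) + 1) * R1 ^ 2 := by
    have h1 : ENNReal.ofReal ((n : ℝ) * r ^ 2) ≤ ENNReal.ofReal (((N : ℝ) + 1) * R1 ^ 2) := by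
      rw [ENNReal.ofReal_mul (by positivity), ENNReal.ofReal_mul (by positivity)]
      have e1 : ENNReal.ofReal ((n : ℝ)) = (n : ENNReal) := ENNReal.ofReal_natCast n
      have e2 : ENNReal.ofReal ((N : ℝ) + 1) = (N : ENNReal) + 1 := by
        rw [ENNReal.ofReal_add (by positivity) zero_le_one, ENNReal.ofReal_natCast,
          ENNReal.ofReal_one]
      rw [e1, e2]
      exact hcount2
    exact (ENNReal.ofReal_le_ofReal_iff (by positivity)).mp h1
  have hNle : (N : ℝ) ≤ L / r := Nat.floor_le (by positivity)
  have hNr : (N : ℝ) * r ≤ L := by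
    rw [← div_mul_cancel₀ L hr.ne']
    exact mul_le_mul_of_nonneg_right hNle hr.le
  have hfinal : (n : ℝ) * r ^ 3 ≤ (L + r) * R1 ^ 2 := by
    nlinarith [mul_le_mul_of_nonneg_right hreal hr.le,
      mul_le_mul_of_nonneg_right hNr (sq_nonneg R1)]
  have hcontra : 4 * R1 ^ 2 * L ≤ (n : ℝ) * r ^ 3 := by
    have hδval : (n : ℝ) * δ * (4 * R1 ^ 2) = (n : ℝ) * r ^ 3 := by
      rw [hδdef]; field_simp
    nlinarith [mul_le_mul_of_nonneg_right hLnδ (by positivity : (0:ℝ) ≤ 4 * R1 ^ 2)]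
  nlinarith [mul_pos hR1 hR1, sq_nonneg R1, hLpos, hLr]
end
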